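/- arXiv:1811.07219 — 6 statements merged into one kernel-verified Lean document; each statement's English description precedes it below -/
import Mathlib

section
/- Under the stated assumptions, the recurrence coefficients of the deformed monic matrix-valued orthogonal polynomials satisfy the non-abelian Toda lattice equations: for every t ∈ I, (d/dt)C_n(t) = Λ (C_n(t) B_{n−1}(t) − B_n(t) C_n(t)) for all n ≥ 1, and (d/dt)B_n(t) = Λ (C_n(t) − C_{n+1}(t)) for all n ≥ 0, where C_0(t) := 0. -/
open Polynomial Matrix MeasureTheory
open scoped ComplexOrder

/-- Evaluation of a matrix-valued polynomial at a real point. -/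
noncomputable def evalM {N : ℕ} (P : Polynomial (Matrix (Fin N) (Fin N) ℂ)) (x : ℝ) :
    Matrix (Fin N) (Fin N) ℂ :=
  Polynomial.eval ((x : ℂ) • (1 : Matrix (Fin N) (Fin N) ℂ)) P

/-- The deformed weight `e^{-xtΛ} W(x)`. -/
noncomputable def defWeight {N : ℕ} (Λ : Matrix (Fin N) (Fin N) ℂ)
    (W : ℝ → Matrix (Fin N) (Fin N) ℂ) (t x : ℝ) : Matrix (Fin N) (Fin N) ℂ :=
  NormedSpace.exp ((-((x : ℂ) * (t : ℂ))) • Λ) * W x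

/-!
Write `⟨p, q⟩ₜ = ∫ p(x) e^{-xtΛ} W(x) q(x)* dμ(x)` (`defPairing`). Since `Λ` commutes with
the coefficients of `p`, differentiating the weight gives
`d/dt ⟨p, q⟩ₜ = ⟨ṗ, q⟩ₜ - Λ ⟨x p, q⟩ₜ + ⟨p, q̇⟩ₜ`, and `Ṗₙ` has degree `< n` because `Pₙ` is
monic. For `Hₙ = ⟨Pₙ, Pₙ⟩ₜ` this gives `Ḣₙ = -Λ Bₙ Hₙ`; for `0 = ⟨Pₙ₊₁, Pₙ⟩ₜ` it shows that the
coefficient `σₙ₊₁` of `xⁿ` in `Pₙ₊₁` satisfies `σ̇ₙ₊₁ Hₙ = Λ Hₙ₊₁ = Λ Cₙ₊₁ Hₙ`. The Toda equations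
follow from `Cₙ₊₁ = Hₙ₊₁ Hₙ⁻¹` and from `Bₙ = σₙ - σₙ₊₁`, read off the recurrence.
-/

-- Matrices carry no global norm; the `ℓ∞`-operator norm makes them a complete normed
-- `ℝ`-algebra (needed for `exp` and for inversion) and induces their usual topology.
attribute [local instance] Matrix.linftyOpNormedAddCommGroup Matrix.linftyOpNormedSpace
  Matrix.linftyOpNormedRing Matrix.linftyOpNormedAlgebra

section MatrixCalculus

variable {m n : Type*} [Fintype m] [Fintype n] [DecidableEq m] [DecidableEq n]
  {F : ℝ → Matrix m n ℂ} {F' : Matrix m n ℂ} {t : ℝ}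

theorem Matrix.hasDerivAt_iff :
    HasDerivAt F F' t ↔ ∀ i j, HasDerivAt (fun s => F s i j) (F' i j) t := by
  refine ⟨fun h i j => ?_, fun h => ?_⟩
  · exact (LinearMap.toContinuousLinearMap
      (entryLinearMap ℝ ℂ i j)).hasFDerivAt.comp_hasDerivAt t h
  · have hsum : HasDerivAt (fun s => ∑ i, ∑ j, single i j (F s i j))
        (∑ i, ∑ j, single i j (F' i j)) t := by
      refine HasDerivAt.fun_sum fun i _ => HasDerivAt.fun_sum fun j _ => ?_
      simpa only [smul_single, smul_eq_mul, mul_one] using (h i j).smul_const (single i j (1 : ℂ))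
    simpa only [← matrix_eq_sum_single] using hsum

theorem Matrix.differentiableAt_of_forall_apply
    (h : ∀ i j, DifferentiableAt ℝ (fun s => F s i j) t) : DifferentiableAt ℝ F t :=
  (Matrix.hasDerivAt_iff (F' := of fun i j => deriv (fun s => F s i j) t) |>.2
    fun i j => (h i j).hasDerivAt).differentiableAt

theorem HasDerivAt.matrix_conjTranspose (h : HasDerivAt F F' t) :
    HasDerivAt (fun s => (F s)ᴴ) F'ᴴ t :=
  Matrix.hasDerivAt_iff.2 fun i j => (Matrix.hasDerivAt_iff.1 h j i).star

theorem HasDerivAt.matrix_inv {F : ℝ → Matrix n n ℂ} {F' : Matrix n n ℂ}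
    (h : HasDerivAt F F' t) (hF : IsUnit (F t)) :
    HasDerivAt (fun s => (F s)⁻¹) (-((F t)⁻¹ * F' * (F t)⁻¹)) t := by
  obtain ⟨u, hu⟩ := hF
  have hinv : HasFDerivAt Ring.inverse _ (F t) := hu ▸ hasFDerivAt_ringInverse (𝕜 := ℝ) u
  simp only [Matrix.nonsing_inv_eq_ringInverse, ← hu, Ring.inverse_unit]
  exact hinv.comp_hasDerivAt t h

end MatrixCalculus

theorem Polynomial.hasDerivAt_eval_of_hasDerivAt_coeff {R : Type*} [NormedRing R]
    [NormedAlgebra ℝ R] {p : ℝ → R[X]} {p' : R[X]} {t : ℝ} {d : ℕ}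
    (hp : ∀ᶠ s in nhds t, (p s).natDegree ≤ d) (hp' : p'.natDegree ≤ d)
    (hcoeff : ∀ k, HasDerivAt (fun s => (p s).coeff k) (p'.coeff k) t) (a : R) :
    HasDerivAt (fun s => (p s).eval a) (p'.eval a) t := by
  have hsum := HasDerivAt.fun_sum (u := Finset.range (d + 1)) fun k _ =>
    (hcoeff k).mul_const (a ^ k)
  rw [← eval_eq_sum_range' (Nat.lt_succ_of_le hp')] at hsum
  refine hsum.congr_of_eventuallyEq ?_
  filter_upwards [hp] with s hs
  exact eval_eq_sum_range' (Nat.lt_succ_of_le hs) a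

theorem Polynomial.exists_hasDerivAt_coeff_of_monic {R : Type*} [NormedRing R] [NormedSpace ℝ R]
    {p : ℝ → R[X]} {t : ℝ} {n : ℕ}
    (hp : ∀ᶠ s in nhds t, (p s).Monic ∧ (p s).natDegree = n)
    (hdiff : ∀ k < n, DifferentiableAt ℝ (fun s => (p s).coeff k) t) :
    ∃ p' : R[X], p'.degree < n ∧ ∀ k, HasDerivAt (fun s => (p s).coeff k) (p'.coeff k) t := by
  classical
  set p' := ∑ k ∈ Finset.range n, monomial k (deriv (fun s => (p s).coeff k) t)
  have hcoeff (k : ℕ) : p'.coeff k = if k < n then deriv (fun s => (p s).coeff k) t else 0 := by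
    simp [p', coeff_monomial]
  refine ⟨p', (degree_lt_iff_coeff_zero _ _).2 fun k hk => by simp [hcoeff, not_lt.2 hk],
    fun k => ?_⟩
  rw [hcoeff]
  split_ifs with hk
  · exact (hdiff k hk).hasDerivAt
  · have hconst : ∀ᶠ s in nhds t, (p s).coeff k = if k = n then 1 else 0 :=
      hp.mono fun s hs => by
        rcases (not_lt.1 hk).eq_or_lt with rfl | hlt
        · rw [if_pos rfl, ← hs.2, hs.1.coeff_natDegree]
        · rw [if_neg hlt.ne', coeff_eq_zero_of_natDegree_lt (hs.2 ▸ hlt)]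
    exact (hasDerivAt_const t _).congr_of_eventuallyEq hconst

theorem Polynomial.natDegree_le_of_degree_lt_succ {R : Type*} [Semiring R] {p : R[X]} {n : ℕ}
    (h : p.degree < ↑(n + 1)) : p.natDegree ≤ n :=
  natDegree_le_iff_coeff_eq_zero.2 fun k hk => (degree_lt_iff_coeff_zero p (n + 1)).1 h k hk

theorem Polynomial.degree_sub_C_coeff_mul_lt {R : Type*} [Ring R] {P r : R[X]} {n : ℕ}
    (hP : P.Monic) (hPn : P.natDegree = n) (hr : r.natDegree ≤ n) :
    (r - C (r.coeff n) * P).degree < n := by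
  refine (degree_lt_iff_coeff_zero _ _).2 fun m hm => ?_
  rw [coeff_sub, coeff_C_mul]
  rcases hm.eq_or_lt with rfl | hm
  · rw [← hPn, hP.coeff_natDegree, mul_one, sub_self]
  · rw [coeff_eq_zero_of_natDegree_lt (hr.trans_lt hm),
      coeff_eq_zero_of_natDegree_lt (p := P) (by omega), mul_zero, sub_zero]

section Pairing

variable {N : ℕ}

theorem evalM_add (p q : (Matrix (Fin N) (Fin N) ℂ)[X]) (x : ℝ) :
    evalM (p + q) x = evalM p x + evalM q x :=
  eval_add

theorem evalM_mul (p q : (Matrix (Fin N) (Fin N) ℂ)[X]) (x : ℝ) :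
    evalM (p * q) x = evalM p x * evalM q x :=
  eval₂_mul_noncomm _ _ fun _ => by
    rw [Commute, SemiconjBy, Matrix.mul_smul, Matrix.smul_mul, mul_one, one_mul]

theorem evalM_C (A : Matrix (Fin N) (Fin N) ℂ) (x : ℝ) : evalM (C A) x = A :=
  eval_C

theorem evalM_X_mul (p : (Matrix (Fin N) (Fin N) ℂ)[X]) (x : ℝ) :
    evalM (X * p) x = (x : ℂ) • evalM p x := by
  rw [evalM_mul, evalM, eval_X, Matrix.smul_mul, one_mul]

theorem evalM_monomial (k : ℕ) (A : Matrix (Fin N) (Fin N) ℂ) (x : ℝ) :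
    evalM (monomial k A) x = (x : ℂ) ^ k • A := by
  rw [evalM, eval_monomial, _root_.smul_pow, one_pow, mul_smul_comm, mul_one]

theorem hasDerivAt_defWeight (Λ : Matrix (Fin N) (Fin N) ℂ) (W : ℝ → Matrix (Fin N) (Fin N) ℂ)
    (x t : ℝ) :
    HasDerivAt (fun s => defWeight Λ W s x) (-(x : ℂ) • (Λ * defWeight Λ W t x)) t := by
  have hexp (s : ℝ) : (-((x : ℂ) * (s : ℂ))) • Λ = s • (-(x : ℂ) • Λ) := by
    rw [← smul_assoc, Complex.real_smul]
    ring_nf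
  simp only [defWeight, hexp]
  have h := (hasDerivAt_exp_smul_const' (𝕂 := ℝ) (-(x : ℂ) • Λ) t).mul_const (W x)
  rwa [smul_mul_assoc, smul_mul_assoc, mul_assoc] at h

variable (Λ : Matrix (Fin N) (Fin N) ℂ) (W : ℝ → Matrix (Fin N) (Fin N) ℂ) (μ : Measure ℝ)
  (t : ℝ)

noncomputable def defIntegrand (p q : (Matrix (Fin N) (Fin N) ℂ)[X]) (x : ℝ) :
    Matrix (Fin N) (Fin N) ℂ :=
  evalM p x * defWeight Λ W t x * (evalM q x)ᴴ

noncomputable def defPairing (p q : (Matrix (Fin N) (Fin N) ℂ)[X]) : Matrix (Fin N) (Fin N) ℂ :=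
  of fun i j => ∫ x, defIntegrand Λ W t p q x i j ∂μ

def HasFiniteMoments : Prop :=
  ∀ (k : ℕ) (i j : Fin N), Integrable (fun x : ℝ => (x : ℂ) ^ k * defWeight Λ W t x i j) μ

variable {Λ W μ t}

theorem defIntegrand_add_left (p p' q : (Matrix (Fin N) (Fin N) ℂ)[X]) (x : ℝ) :
    defIntegrand Λ W t (p + p') q x = defIntegrand Λ W t p q x + defIntegrand Λ W t p' q x := by
  simp only [defIntegrand, evalM_add, add_mul]

theorem defIntegrand_add_right (p q q' : (Matrix (Fin N) (Fin N) ℂ)[X]) (x : ℝ) :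
    defIntegrand Λ W t p (q + q') x = defIntegrand Λ W t p q x + defIntegrand Λ W t p q' x := by
  simp only [defIntegrand, evalM_add, conjTranspose_add, mul_add]

theorem defIntegrand_C_mul_left (A : Matrix (Fin N) (Fin N) ℂ)
    (p q : (Matrix (Fin N) (Fin N) ℂ)[X]) (x : ℝ) :
    defIntegrand Λ W t (C A * p) q x = A * defIntegrand Λ W t p q x := by
  simp only [defIntegrand, evalM_mul, evalM_C, mul_assoc]

theorem defIntegrand_C_mul_right (A : Matrix (Fin N) (Fin N) ℂ)
    (p q : (Matrix (Fin N) (Fin N) ℂ)[X]) (x : ℝ) :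
    defIntegrand Λ W t p (C A * q) x = defIntegrand Λ W t p q x * Aᴴ := by
  simp only [defIntegrand, evalM_mul, evalM_C, conjTranspose_mul, mul_assoc]

theorem defIntegrand_monomial_apply (k l : ℕ) (A B : Matrix (Fin N) (Fin N) ℂ) (x : ℝ)
    (i j : Fin N) :
    defIntegrand Λ W t (monomial k A) (monomial l B) x i j =
      ∑ b, ∑ a, A i a * star (B j b) * ((x : ℂ) ^ (k + l) * defWeight Λ W t x a b) := by
  have hx : star ((x : ℂ) ^ l) = (x : ℂ) ^ l := by
    rw [star_pow, Complex.star_def, Complex.conj_ofReal]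
  simp only [defIntegrand, evalM_monomial, conjTranspose_smul, hx, Matrix.smul_mul,
    Matrix.smul_apply, smul_eq_mul, Matrix.mul_apply, Finset.mul_sum, Finset.sum_mul,
    conjTranspose_apply]
  refine Finset.sum_congr rfl fun b _ => Finset.sum_congr rfl fun a _ => ?_
  ring

theorem integrable_defIntegrand_apply (hmt : HasFiniteMoments Λ W μ t)
    (p q : (Matrix (Fin N) (Fin N) ℂ)[X]) (i j : Fin N) :
    Integrable (fun x => defIntegrand Λ W t p q x i j) μ := by
  induction p using Polynomial.induction_on' with
  | add p p' hp hp' => simpa only [defIntegrand_add_left, Matrix.add_apply] using hp.fun_add hp'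
  | monomial k A =>
    induction q using Polynomial.induction_on' with
    | add q q' hq hq' =>
      simpa only [defIntegrand_add_right, Matrix.add_apply] using hq.fun_add hq'
    | monomial l B =>
      simp only [defIntegrand_monomial_apply]
      exact integrable_finsetSum _ fun b _ => integrable_finsetSum _ fun a _ =>
        (hmt (k + l) a b).const_mul _

theorem defPairing_apply (p q : (Matrix (Fin N) (Fin N) ℂ)[X]) (i j : Fin N) :
    defPairing Λ W μ t p q i j = ∫ x, defIntegrand Λ W t p q x i j ∂μ :=
  rfl

theorem defPairing_add_left (hmt : HasFiniteMoments Λ W μ t)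
    (p p' q : (Matrix (Fin N) (Fin N) ℂ)[X]) :
    defPairing Λ W μ t (p + p') q = defPairing Λ W μ t p q + defPairing Λ W μ t p' q := by
  ext i j
  simp only [defPairing_apply, Matrix.add_apply, defIntegrand_add_left]
  exact integral_add (integrable_defIntegrand_apply hmt p q i j)
    (integrable_defIntegrand_apply hmt p' q i j)

theorem defPairing_add_right (hmt : HasFiniteMoments Λ W μ t)
    (p q q' : (Matrix (Fin N) (Fin N) ℂ)[X]) :
    defPairing Λ W μ t p (q + q') = defPairing Λ W μ t p q + defPairing Λ W μ t p q' := by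
  ext i j
  simp only [defPairing_apply, Matrix.add_apply, defIntegrand_add_right]
  exact integral_add (integrable_defIntegrand_apply hmt p q i j)
    (integrable_defIntegrand_apply hmt p q' i j)

theorem defPairing_C_mul_left (hmt : HasFiniteMoments Λ W μ t) (A : Matrix (Fin N) (Fin N) ℂ)
    (p q : (Matrix (Fin N) (Fin N) ℂ)[X]) :
    defPairing Λ W μ t (C A * p) q = A * defPairing Λ W μ t p q := by
  ext i j
  simp only [defPairing_apply, Matrix.mul_apply, ← integral_const_mul]
  rw [← integral_finsetSum _ fun b _ => (integrable_defIntegrand_apply hmt p q b j).const_mul _]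
  simp only [defIntegrand_C_mul_left, Matrix.mul_apply]

theorem defPairing_C_mul_right (hmt : HasFiniteMoments Λ W μ t) (A : Matrix (Fin N) (Fin N) ℂ)
    (p q : (Matrix (Fin N) (Fin N) ℂ)[X]) :
    defPairing Λ W μ t p (C A * q) = defPairing Λ W μ t p q * Aᴴ := by
  ext i j
  simp only [defPairing_apply, Matrix.mul_apply, ← integral_mul_const]
  rw [← integral_finsetSum _ fun b _ => (integrable_defIntegrand_apply hmt p q i b).mul_const _]
  simp only [defIntegrand_C_mul_right, Matrix.mul_apply]

theorem defPairing_zero_left (q : (Matrix (Fin N) (Fin N) ℂ)[X]) : defPairing Λ W μ t 0 q = 0 := by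
  ext i j
  simp [defPairing_apply, defIntegrand, evalM]

theorem defPairing_zero_right (p : (Matrix (Fin N) (Fin N) ℂ)[X]) : defPairing Λ W μ t p 0 = 0 := by
  ext i j
  simp [defPairing_apply, defIntegrand, evalM]

theorem defPairing_X_mul (p q : (Matrix (Fin N) (Fin N) ℂ)[X]) :
    defPairing Λ W μ t (X * p) q = defPairing Λ W μ t p (X * q) := by
  ext i j
  simp only [defPairing_apply, defIntegrand, evalM_X_mul, conjTranspose_smul, Complex.star_def,
    Complex.conj_ofReal, Matrix.smul_mul, Matrix.mul_smul]

end Pairing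

section Derivative

variable {N : ℕ} {Λ : Matrix (Fin N) (Fin N) ℂ} {W : ℝ → Matrix (Fin N) (Fin N) ℂ}
  {μ : Measure ℝ} {t : ℝ}

theorem hasDerivAt_evalM {p : ℝ → (Matrix (Fin N) (Fin N) ℂ)[X]}
    {p' : (Matrix (Fin N) (Fin N) ℂ)[X]} {d : ℕ} (hp : ∀ᶠ s in nhds t, (p s).natDegree ≤ d)
    (hp' : p'.natDegree ≤ d) (hcoeff : ∀ k, HasDerivAt (fun s => (p s).coeff k) (p'.coeff k) t)
    (x : ℝ) : HasDerivAt (fun s => evalM (p s) x) (evalM p' x) t :=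
  Polynomial.hasDerivAt_eval_of_hasDerivAt_coeff hp hp' hcoeff _

theorem hasDerivAt_defIntegrand {p q : ℝ → (Matrix (Fin N) (Fin N) ℂ)[X]}
    {p' q' : (Matrix (Fin N) (Fin N) ℂ)[X]} {x : ℝ}
    (hp : HasDerivAt (fun s => evalM (p s) x) (evalM p' x) t)
    (hq : HasDerivAt (fun s => evalM (q s) x) (evalM q' x) t) (hΛ : Commute (C Λ) (p t)) :
    HasDerivAt (fun s => defIntegrand Λ W s (p s) (q s) x)
      (defIntegrand Λ W t p' (q t) x - defIntegrand Λ W t (C Λ * (X * p t)) (q t) x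
        + defIntegrand Λ W t (p t) q' x) t := by
  have h : HasDerivAt (fun s => defIntegrand Λ W s (p s) (q s) x)
      ((evalM p' x * defWeight Λ W t x + evalM (p t) x * (-(x : ℂ) • (Λ * defWeight Λ W t x)))
        * (evalM (q t) x)ᴴ + evalM (p t) x * defWeight Λ W t x * (evalM q' x)ᴴ) t :=
    (hp.fun_mul (hasDerivAt_defWeight Λ W x t)).fun_mul hq.matrix_conjTranspose
  have hΛx : Λ * evalM (p t) x = evalM (p t) x * Λ := by
    simpa only [evalM_mul, evalM_C] using congrArg (evalM · x) hΛ.eq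
  refine h.congr_deriv ?_
  rw [defIntegrand, defIntegrand, defIntegrand, evalM_mul, evalM_C, evalM_X_mul,
    mul_smul_comm _ Λ, hΛx]
  simp only [Matrix.smul_mul, Matrix.mul_smul, Matrix.add_mul, mul_assoc, neg_smul,
    Matrix.mul_neg, Matrix.neg_mul]
  abel

variable (Λ W μ) in
def DiffUnderIntegral (I : Set ℝ) : Prop :=
  ∀ p q : ℝ → (Matrix (Fin N) (Fin N) ℂ)[X],
    (∀ (k : ℕ) (i j : Fin N), DifferentiableOn ℝ (fun t => ((p t).coeff k) i j) I) →
    (∀ (k : ℕ) (i j : Fin N), DifferentiableOn ℝ (fun t => ((q t).coeff k) i j) I) →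
    (∃ dp : ℕ, ∀ t ∈ I, (p t).natDegree ≤ dp) →
    (∃ dq : ℕ, ∀ t ∈ I, (q t).natDegree ≤ dq) →
    ∀ t ∈ I, ∀ i j : Fin N,
      HasDerivAt (fun s => defPairing Λ W μ s (p s) (q s) i j)
        (∫ x, deriv (fun s => defIntegrand Λ W s (p s) (q s) x i j) t ∂μ) t

theorem hasDerivAt_defPairing {I : Set ℝ} (hDUI : DiffUnderIntegral Λ W μ I) (hI : I ∈ nhds t)
    (hmt : HasFiniteMoments Λ W μ t) {p q : ℝ → (Matrix (Fin N) (Fin N) ℂ)[X]}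
    {p' q' : (Matrix (Fin N) (Fin N) ℂ)[X]} {dp dq : ℕ}
    (hpI : ∀ k i j, DifferentiableOn ℝ (fun s => (p s).coeff k i j) I)
    (hqI : ∀ k i j, DifferentiableOn ℝ (fun s => (q s).coeff k i j) I)
    (hpd : ∀ s ∈ I, (p s).natDegree ≤ dp) (hqd : ∀ s ∈ I, (q s).natDegree ≤ dq)
    (hp'd : p'.natDegree ≤ dp) (hq'd : q'.natDegree ≤ dq)
    (hp' : ∀ k, HasDerivAt (fun s => (p s).coeff k) (p'.coeff k) t)
    (hq' : ∀ k, HasDerivAt (fun s => (q s).coeff k) (q'.coeff k) t)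
    (hΛ : Commute (C Λ) (p t)) :
    HasDerivAt (fun s => defPairing Λ W μ s (p s) (q s))
      (defPairing Λ W μ t p' (q t) - Λ * defPairing Λ W μ t (X * p t) (q t)
        + defPairing Λ W μ t (p t) q') t := by
  have hD (x : ℝ) := hasDerivAt_defIntegrand (W := W)
    (hasDerivAt_evalM (Filter.mem_of_superset hI hpd) hp'd hp' x)
    (hasDerivAt_evalM (Filter.mem_of_superset hI hqd) hq'd hq' x) hΛ
  refine Matrix.hasDerivAt_iff.2 fun i j => ?_
  convert hDUI p q hpI hqI ⟨dp, hpd⟩ ⟨dq, hqd⟩ t (mem_of_mem_nhds hI) i j using 1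
  simp only [fun x => ((Matrix.hasDerivAt_iff.1 (hD x)) i j).deriv, Matrix.add_apply,
    Matrix.sub_apply]
  rw [integral_add ((integrable_defIntegrand_apply hmt _ _ i j).sub'
      (integrable_defIntegrand_apply hmt _ _ i j)) (integrable_defIntegrand_apply hmt _ _ i j),
    integral_sub (integrable_defIntegrand_apply hmt _ _ i j)
      (integrable_defIntegrand_apply hmt _ _ i j), ← defPairing_C_mul_left hmt]
  rfl

end Derivative

section Orthogonality

variable {N : ℕ} {Λ : Matrix (Fin N) (Fin N) ℂ} {W : ℝ → Matrix (Fin N) (Fin N) ℂ}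
  {μ : Measure ℝ} {t : ℝ} {P : ℕ → (Matrix (Fin N) (Fin N) ℂ)[X]}
  {H B C : ℕ → Matrix (Fin N) (Fin N) ℂ}

variable (Λ W μ t) in
structure IsMonicOrthogonal (P : ℕ → (Matrix (Fin N) (Fin N) ℂ)[X])
    (H : ℕ → Matrix (Fin N) (Fin N) ℂ) : Prop where
  monic : ∀ n, (P n).Monic
  natDegree_eq : ∀ n, (P n).natDegree = n
  defPairing_eq : ∀ n m, defPairing Λ W μ t (P n) (P m) = if n = m then H n else 0

namespace IsMonicOrthogonal

theorem coeff_self (hOP : IsMonicOrthogonal Λ W μ t P H) (n : ℕ) : (P n).coeff n = 1 := by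
  simpa only [hOP.natDegree_eq] using (hOP.monic n).coeff_natDegree

theorem defPairing_eq_zero_of_degree_lt (hOP : IsMonicOrthogonal Λ W μ t P H)
    (hmt : HasFiniteMoments Λ W μ t) {n m : ℕ} (hnm : n ≤ m)
    {r : (Matrix (Fin N) (Fin N) ℂ)[X]} (hr : r.degree < n) :
    defPairing Λ W μ t r (P m) = 0 ∧ defPairing Λ W μ t (P m) r = 0 := by
  induction n generalizing r with
  | zero =>
    rw [degree_eq_bot.1 (Nat.WithBot.lt_zero_iff.1 hr)]
    exact ⟨defPairing_zero_left (P m), defPairing_zero_right (P m)⟩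
  | succ n ih =>
    obtain ⟨hlow_left, hlow_right⟩ := ih (by omega) (degree_sub_C_coeff_mul_lt (hOP.monic n)
      (hOP.natDegree_eq n) (natDegree_le_of_degree_lt_succ hr))
    rw [← sub_add_cancel r (C (r.coeff n) * P n), defPairing_add_left hmt,
      defPairing_add_right hmt, defPairing_C_mul_left hmt, defPairing_C_mul_right hmt,
      hOP.defPairing_eq, hOP.defPairing_eq, if_neg (by omega), if_neg (by omega), hlow_left,
      hlow_right]
    simp

theorem defPairing_of_natDegree_le (hOP : IsMonicOrthogonal Λ W μ t P H)
    (hmt : HasFiniteMoments Λ W μ t) {n : ℕ} {r : (Matrix (Fin N) (Fin N) ℂ)[X]}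
    (hr : r.natDegree ≤ n) :
    defPairing Λ W μ t r (P n) = r.coeff n * H n ∧
      defPairing Λ W μ t (P n) r = H n * (r.coeff n)ᴴ := by
  obtain ⟨hlow_left, hlow_right⟩ := hOP.defPairing_eq_zero_of_degree_lt hmt le_rfl
    (degree_sub_C_coeff_mul_lt (hOP.monic n) (hOP.natDegree_eq n) hr)
  rw [← sub_add_cancel r (C (r.coeff n) * P n), defPairing_add_left hmt,
    defPairing_add_right hmt, defPairing_C_mul_left hmt, defPairing_C_mul_right hmt,
    hOP.defPairing_eq, if_pos rfl, hlow_left, hlow_right]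
  simp

theorem defPairing_X_mul_succ (hOP : IsMonicOrthogonal Λ W μ t P H)
    (hmt : HasFiniteMoments Λ W μ t) (n : ℕ) :
    defPairing Λ W μ t (X * P (n + 1)) (P n) = H (n + 1) := by
  have hdeg : (X * P n).natDegree ≤ n + 1 := natDegree_mul_le.trans (by
    rw [hOP.natDegree_eq, add_comm n]
    gcongr
    exact natDegree_X_le)
  rw [defPairing_X_mul, (hOP.defPairing_of_natDegree_le hmt hdeg).2, coeff_X_mul,
    hOP.coeff_self, conjTranspose_one, Matrix.mul_one]

-- In the recurrence `hrec`, `n - 1` is truncated: at `n = 0` its last term vanishes only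
-- because `C 0 = 0`.
theorem defPairing_X_mul_self (hOP : IsMonicOrthogonal Λ W μ t P H)
    (hmt : HasFiniteMoments Λ W μ t)
    (hrec : ∀ n, X * P n = P (n + 1) + Polynomial.C (B n) * P n + Polynomial.C (C n) * P (n - 1))
    (hC0 : C 0 = 0) (n : ℕ) : defPairing Λ W μ t (X * P n) (P n) = B n * H n := by
  rw [hrec, defPairing_add_left hmt, defPairing_add_left hmt, defPairing_C_mul_left hmt,
    defPairing_C_mul_left hmt, hOP.defPairing_eq, hOP.defPairing_eq, hOP.defPairing_eq,
    if_neg n.succ_ne_self, if_pos rfl]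
  rcases n with _ | n
  · simp [hC0]
  · simp

theorem C_succ_mul (hOP : IsMonicOrthogonal Λ W μ t P H) (hmt : HasFiniteMoments Λ W μ t)
    (hrec : ∀ n, X * P n = P (n + 1) + Polynomial.C (B n) * P n + Polynomial.C (C n) * P (n - 1))
    (n : ℕ) : C (n + 1) * H n = H (n + 1) := by
  rw [← hOP.defPairing_X_mul_succ hmt, hrec, defPairing_add_left hmt, defPairing_add_left hmt,
    defPairing_C_mul_left hmt, defPairing_C_mul_left hmt, hOP.defPairing_eq, hOP.defPairing_eq,
    hOP.defPairing_eq, if_neg (by omega), if_neg (by omega), Nat.add_sub_cancel, if_pos rfl]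
  simp

end IsMonicOrthogonal

theorem B_eq_coeff_sub_coeff (hmonic : ∀ n, (P n).Monic) (hdeg : ∀ n, (P n).natDegree = n)
    (hrec : ∀ n, X * P n = P (n + 1) + Polynomial.C (B n) * P n + Polynomial.C (C n) * P (n - 1))
    (hC0 : C 0 = 0) (n : ℕ) : B n = (X * P n).coeff n - (P (n + 1)).coeff n := by
  have hlead : (P n).coeff n = 1 := by simpa only [hdeg] using (hmonic n).coeff_natDegree
  have hlow : C n * (P (n - 1)).coeff n = 0 := by
    rcases n with _ | n
    · rw [hC0, Matrix.zero_mul]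
    · rw [coeff_eq_zero_of_natDegree_lt (by rw [hdeg]; omega), Matrix.mul_zero]
  rw [hrec, coeff_add, coeff_add, coeff_C_mul, coeff_C_mul, hlow, hlead, mul_one]
  abel

end Orthogonality

section TodaLattice

variable {N : ℕ} {Λ : Matrix (Fin N) (Fin N) ℂ} {W : ℝ → Matrix (Fin N) (Fin N) ℂ}
  {μ : Measure ℝ} {I : Set ℝ} {t : ℝ} {P : ℕ → ℝ → (Matrix (Fin N) (Fin N) ℂ)[X]}
  {H B C : ℕ → ℝ → Matrix (Fin N) (Fin N) ℂ}

theorem exists_hasDerivAt_defPairing (hDUI : DiffUnderIntegral Λ W μ I) (hI : I ∈ nhds t)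
    (hmt : HasFiniteMoments Λ W μ t) (hOP : ∀ s ∈ I, IsMonicOrthogonal Λ W μ s (P · s) (H · s))
    (hdiff : ∀ n k i j, DifferentiableOn ℝ (fun s => (P n s).coeff k i j) I)
    (hΛP : ∀ n, Commute (Polynomial.C Λ) (P n t)) :
    ∃ dP : ℕ → (Matrix (Fin N) (Fin N) ℂ)[X], (∀ n, (dP n).degree < n) ∧
      (∀ n k, HasDerivAt (fun s => (P n s).coeff k) ((dP n).coeff k) t) ∧
      ∀ n m, HasDerivAt (fun s => defPairing Λ W μ s (P n s) (P m s))
        (defPairing Λ W μ t (dP n) (P m t) - Λ * defPairing Λ W μ t (X * P n t) (P m t)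
          + defPairing Λ W μ t (P n t) (dP m)) t := by
  have hmonic (n : ℕ) : ∀ᶠ s in nhds t, (P n s).Monic ∧ (P n s).natDegree = n :=
    Filter.mem_of_superset hI fun s hs => ⟨(hOP s hs).monic n, (hOP s hs).natDegree_eq n⟩
  choose dP hdPdeg hdP using fun n => Polynomial.exists_hasDerivAt_coeff_of_monic (hmonic n)
    fun k _ => Matrix.differentiableAt_of_forall_apply fun i j =>
      (hdiff n k i j t (mem_of_mem_nhds hI)).differentiableAt hI
  refine ⟨dP, hdPdeg, hdP, fun n m => hasDerivAt_defPairing hDUI hI hmt (hdiff n) (hdiff m)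
    (fun s hs => ((hOP s hs).natDegree_eq n).le) (fun s hs => ((hOP s hs).natDegree_eq m).le)
    (natDegree_le_iff_degree_le.2 (hdPdeg n).le) (natDegree_le_iff_degree_le.2 (hdPdeg m).le)
    (hdP n) (hdP m) (hΛP n)⟩

theorem hasDerivAt_H (hDUI : DiffUnderIntegral Λ W μ I) (hI : I ∈ nhds t)
    (hmt : HasFiniteMoments Λ W μ t) (hOP : ∀ s ∈ I, IsMonicOrthogonal Λ W μ s (P · s) (H · s))
    (hdiff : ∀ n k i j, DifferentiableOn ℝ (fun s => (P n s).coeff k i j) I)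
    (hΛP : ∀ n, Commute (Polynomial.C Λ) (P n t))
    (hrec : ∀ n, X * P n t =
      P (n + 1) t + Polynomial.C (B n t) * P n t + Polynomial.C (C n t) * P (n - 1) t)
    (hC0 : C 0 t = 0) (n : ℕ) : HasDerivAt (H n) (-(Λ * (B n t * H n t))) t := by
  obtain ⟨dP, hdPdeg, -, hpair⟩ := exists_hasDerivAt_defPairing hDUI hI hmt hOP hdiff hΛP
  have hOPt := hOP t (mem_of_mem_nhds hI)
  obtain ⟨hleft, hright⟩ := hOPt.defPairing_eq_zero_of_degree_lt hmt le_rfl (hdPdeg n)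
  have h := hpair n n
  rw [hleft, hright, hOPt.defPairing_X_mul_self hmt hrec hC0, zero_sub, add_zero] at h
  refine h.congr_of_eventuallyEq ?_
  filter_upwards [hI] with s hs
  rw [(hOP s hs).defPairing_eq, if_pos rfl]

theorem hasDerivAt_coeff_P_succ (hDUI : DiffUnderIntegral Λ W μ I) (hI : I ∈ nhds t)
    (hmt : HasFiniteMoments Λ W μ t) (hOP : ∀ s ∈ I, IsMonicOrthogonal Λ W μ s (P · s) (H · s))
    (hdiff : ∀ n k i j, DifferentiableOn ℝ (fun s => (P n s).coeff k i j) I)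
    (hΛP : ∀ n, Commute (Polynomial.C Λ) (P n t))
    (hrec : ∀ n, X * P n t =
      P (n + 1) t + Polynomial.C (B n t) * P n t + Polynomial.C (C n t) * P (n - 1) t)
    {n : ℕ} (hH : IsUnit (H n t)) :
    HasDerivAt (fun s => (P (n + 1) s).coeff n) (Λ * C (n + 1) t) t := by
  obtain ⟨dP, hdPdeg, hdP, hpair⟩ := exists_hasDerivAt_defPairing hDUI hI hmt hOP hdiff hΛP
  have hOPt := hOP t (mem_of_mem_nhds hI)
  have hzero : HasDerivAt (fun s => defPairing Λ W μ s (P (n + 1) s) (P n s)) 0 t := by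
    refine (hasDerivAt_const t 0).congr_of_eventuallyEq ?_
    filter_upwards [hI] with s hs
    rw [(hOP s hs).defPairing_eq, if_neg n.succ_ne_self]
  have h := (hpair (n + 1) n).unique hzero
  rw [(hOPt.defPairing_of_natDegree_le hmt (natDegree_le_of_degree_lt_succ (hdPdeg (n + 1)))).1,
    hOPt.defPairing_X_mul_succ hmt,
    (hOPt.defPairing_eq_zero_of_degree_lt hmt n.le_succ (hdPdeg n)).2, add_zero, sub_eq_zero,
    ← hOPt.C_succ_mul hmt hrec, ← mul_assoc] at h
  rw [← hH.mul_left_injective h]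
  exact hdP (n + 1) n

theorem hasDerivAt_C_succ_of_hasDerivAt_H {n : ℕ} (hI : I ∈ nhds t)
    (hCH : ∀ s ∈ I, C (n + 1) s * H n s = H (n + 1) s) (hH : ∀ s ∈ I, IsUnit (H n s))
    (hΛC : Λ * C (n + 1) t = C (n + 1) t * Λ)
    (hHn : HasDerivAt (H n) (-(Λ * (B n t * H n t))) t)
    (hHn1 : HasDerivAt (H (n + 1)) (-(Λ * (B (n + 1) t * H (n + 1) t))) t) :
    HasDerivAt (C (n + 1)) (Λ * (C (n + 1) t * B n t - B (n + 1) t * C (n + 1) t)) t := by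
  have hdet (s : ℝ) (hs : s ∈ I) : IsUnit (H n s).det :=
    (Matrix.isUnit_iff_isUnit_det _).1 (hH s hs)
  have ht := mem_of_mem_nhds hI
  have h : HasDerivAt (fun s => H (n + 1) s * (H n s)⁻¹)
      (-(Λ * (B (n + 1) t * H (n + 1) t)) * (H n t)⁻¹
        + H (n + 1) t * -((H n t)⁻¹ * -(Λ * (B n t * H n t)) * (H n t)⁻¹)) t :=
    hHn1.fun_mul (hHn.matrix_inv (hH t ht))
  refine (h.congr_deriv ?_).congr_of_eventuallyEq ?_
  · rw [← hCH t ht]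
    simp only [mul_assoc, Matrix.mul_nonsing_inv _ (hdet t ht),
      Matrix.mul_nonsing_inv_cancel_left _ _ (hdet t ht), Matrix.neg_mul, Matrix.mul_neg, neg_neg,
      Matrix.mul_one, mul_sub]
    rw [← mul_assoc Λ (C (n + 1) t), hΛC, mul_assoc]
    abel
  · filter_upwards [hI] with s hs
    rw [← hCH s hs, Matrix.mul_nonsing_inv_cancel_right _ _ (hdet s hs)]

theorem hasDerivAt_B_of_hasDerivAt_coeff {n : ℕ} (hI : I ∈ nhds t)
    (hB : ∀ s ∈ I, B n s = (X * P n s).coeff n - (P (n + 1) s).coeff n) (hC0 : C 0 t = 0)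
    (hcoeff : ∀ m, HasDerivAt (fun s => (P (m + 1) s).coeff m) (Λ * C (m + 1) t) t) :
    HasDerivAt (B n) (Λ * (C n t - C (n + 1) t)) t := by
  have hX : HasDerivAt (fun s => (X * P n s).coeff n) (Λ * C n t) t := by
    rcases n with _ | m
    · simp only [mul_coeff_zero, coeff_X_zero, zero_mul, hC0, Matrix.mul_zero]
      exact hasDerivAt_const t _
    · simpa only [coeff_X_mul] using hcoeff m
  rw [mul_sub]
  exact (hX.sub (hcoeff n)).congr_of_eventuallyEq (Filter.mem_of_superset hI hB)

end TodaLattice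

theorem stmt_0_general (N : ℕ)
    (μ : Measure ℝ)
    (W : ℝ → Matrix (Fin N) (Fin N) ℂ)
    (Λ : Matrix (Fin N) (Fin N) ℂ)
    (I : Set ℝ) (hIopen : IsOpen I)
    (hmom : ∀ t ∈ I, ∀ (k : ℕ) (i j : Fin N),
      Integrable (fun x : ℝ => (x : ℂ) ^ k * defWeight Λ W t x i j) μ)
    (P : ℕ → ℝ → Polynomial (Matrix (Fin N) (Fin N) ℂ))
    (hmonic : ∀ n : ℕ, ∀ t ∈ I, (P n t).Monic ∧ (P n t).natDegree = n)
    (H : ℕ → ℝ → Matrix (Fin N) (Fin N) ℂ)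
    (hHpos : ∀ n : ℕ, ∀ t ∈ I, (H n t).PosDef)
    (horth : ∀ t ∈ I, ∀ n m : ℕ,
      (Matrix.of fun i j => ∫ x : ℝ,
          (evalM (P n t) x * defWeight Λ W t x * (evalM (P m t) x)ᴴ) i j ∂μ) =
        if n = m then H n t else 0)
    (B C : ℕ → ℝ → Matrix (Fin N) (Fin N) ℂ)
    (hC0 : ∀ t ∈ I, C 0 t = 0)
    (hrec0 : ∀ t ∈ I, Polynomial.X * P 0 t = P 1 t + Polynomial.C (B 0 t) * P 0 t)
    (hrec : ∀ t ∈ I, ∀ n : ℕ,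
      Polynomial.X * P (n + 1) t =
        P (n + 2) t + Polynomial.C (B (n + 1) t) * P (n + 1) t +
          Polynomial.C (C (n + 1) t) * P n t)
    (hcomm : ∀ t ∈ I, ∀ n : ℕ,
      Λ * B n t = B n t * Λ ∧ Λ * C n t = C n t * Λ ∧ Λ * H n t = H n t * Λᴴ ∧
        Polynomial.C Λ * P n t = P n t * Polynomial.C Λ)
    (hdiff : ∀ (n k : ℕ) (i j : Fin N),
      DifferentiableOn ℝ (fun t => ((P n t).coeff k) i j) I)
    (hDUI : ∀ p q : ℝ → Polynomial (Matrix (Fin N) (Fin N) ℂ),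
      (∀ (k : ℕ) (i j : Fin N), DifferentiableOn ℝ (fun t => ((p t).coeff k) i j) I) →
      (∀ (k : ℕ) (i j : Fin N), DifferentiableOn ℝ (fun t => ((q t).coeff k) i j) I) →
      (∃ dp : ℕ, ∀ t ∈ I, (p t).natDegree ≤ dp) →
      (∃ dq : ℕ, ∀ t ∈ I, (q t).natDegree ≤ dq) →
      ∀ t ∈ I, ∀ i j : Fin N,
        HasDerivAt
          (fun s : ℝ => ∫ x : ℝ,
            (evalM (p s) x * defWeight Λ W s x * (evalM (q s) x)ᴴ) i j ∂μ)
          (∫ x : ℝ,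
            deriv (fun s : ℝ =>
              (evalM (p s) x * defWeight Λ W s x * (evalM (q s) x)ᴴ) i j) t ∂μ) t) :
    ∀ t ∈ I,
      (∀ (n : ℕ) (i j : Fin N),
        HasDerivAt (fun s : ℝ => C (n + 1) s i j)
          ((Λ * (C (n + 1) t * B n t - B (n + 1) t * C (n + 1) t)) i j) t) ∧
      (∀ (n : ℕ) (i j : Fin N),
        HasDerivAt (fun s : ℝ => B n s i j)
          ((Λ * (C n t - C (n + 1) t)) i j) t) := by
  intro t ht
  have hI : I ∈ nhds t := hIopen.mem_nhds ht
  have hOP (s : ℝ) (hs : s ∈ I) : IsMonicOrthogonal Λ W μ s (P · s) (H · s) :=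
    ⟨fun n => (hmonic n s hs).1, fun n => (hmonic n s hs).2, horth s hs⟩
  have hrecUniform (s : ℝ) (hs : s ∈ I) (n : ℕ) : X * P n s =
      P (n + 1) s + Polynomial.C (B n s) * P n s + Polynomial.C (C n s) * P (n - 1) s := by
    rcases n with _ | n
    · simp [hrec0 s hs, hC0 s hs]
    · exact hrec s hs n
  have hΛP (n : ℕ) : Commute (Polynomial.C Λ) (P n t) := (hcomm t ht n).2.2.2
  have hH (n : ℕ) : HasDerivAt (H n) (-(Λ * (B n t * H n t))) t :=
    hasDerivAt_H hDUI hI (hmom t ht) hOP hdiff hΛP (hrecUniform t ht) (hC0 t ht) n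
  have hcoeff (n : ℕ) : HasDerivAt (fun s => (P (n + 1) s).coeff n) (Λ * C (n + 1) t) t :=
    hasDerivAt_coeff_P_succ hDUI hI (hmom t ht) hOP hdiff hΛP (hrecUniform t ht)
      (hHpos n t ht).isUnit
  refine ⟨fun n => Matrix.hasDerivAt_iff.1 ?_, fun n => Matrix.hasDerivAt_iff.1 ?_⟩
  · exact hasDerivAt_C_succ_of_hasDerivAt_H hI
      (fun s hs => (hOP s hs).C_succ_mul (hmom s hs) (hrecUniform s hs) n)
      (fun s hs => (hHpos n s hs).isUnit) (hcomm t ht (n + 1)).2.1 (hH n) (hH (n + 1))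
  · exact hasDerivAt_B_of_hasDerivAt_coeff hI (fun s hs => B_eq_coeff_sub_coeff
      (hOP s hs).monic (hOP s hs).natDegree_eq (hrecUniform s hs) (hC0 s hs) n) (hC0 t ht) hcoeff

/-- Proposition 2.2: the recurrence coefficients `B_n(t)`, `C_n(t)` of the monic
matrix-valued orthogonal polynomials for the deformed weight `e^{-xtΛ} W(x) dμ(x)`
satisfy the non-abelian Toda lattice equations
`Ċ_n = Λ(C_n B_{n-1} - B_n C_n)` (n ≥ 1) and `Ḃ_n = Λ(C_n - C_{n+1})` (n ≥ 0),
with `C_0(t) := 0`. -/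
theorem stmt_0 (N : ℕ) (hN : 0 < N)
    (μ : Measure ℝ)
    (hsupp : ∀ s : Finset ℝ, μ ((↑s : Set ℝ)ᶜ) ≠ 0)
    (W : ℝ → Matrix (Fin N) (Fin N) ℂ)
    (hWmeas : ∀ i j : Fin N, Measurable fun x => W x i j)
    (hWpos : ∀ᵐ x ∂μ, (W x).PosDef)
    (Λ : Matrix (Fin N) (Fin N) ℂ)
    (hΛ : ∀ᵐ x ∂μ, Λ * W x = W x * Λᴴ)
    (I : Set ℝ) (hIopen : IsOpen I) (hIconn : I.OrdConnected) (h0I : (0 : ℝ) ∈ I)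
    (hmom : ∀ t ∈ I, ∀ (k : ℕ) (i j : Fin N),
      Integrable (fun x : ℝ => (x : ℂ) ^ k * defWeight Λ W t x i j) μ)
    (P : ℕ → ℝ → Polynomial (Matrix (Fin N) (Fin N) ℂ))
    (hmonic : ∀ n : ℕ, ∀ t ∈ I, (P n t).Monic ∧ (P n t).natDegree = n)
    (H : ℕ → ℝ → Matrix (Fin N) (Fin N) ℂ)
    (hHpos : ∀ n : ℕ, ∀ t ∈ I, (H n t).PosDef)
    (horth : ∀ t ∈ I, ∀ n m : ℕ,
      (Matrix.of fun i j => ∫ x : ℝ,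
          (evalM (P n t) x * defWeight Λ W t x * (evalM (P m t) x)ᴴ) i j ∂μ) =
        if n = m then H n t else 0)
    (B C : ℕ → ℝ → Matrix (Fin N) (Fin N) ℂ)
    (hC0 : ∀ t ∈ I, C 0 t = 0)
    (hrec0 : ∀ t ∈ I, Polynomial.X * P 0 t = P 1 t + Polynomial.C (B 0 t) * P 0 t)
    (hrec : ∀ t ∈ I, ∀ n : ℕ,
      Polynomial.X * P (n + 1) t =
        P (n + 2) t + Polynomial.C (B (n + 1) t) * P (n + 1) t +
          Polynomial.C (C (n + 1) t) * P n t)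
    (hcomm : ∀ t ∈ I, ∀ n : ℕ,
      Λ * B n t = B n t * Λ ∧ Λ * C n t = C n t * Λ ∧ Λ * H n t = H n t * Λᴴ ∧
        Polynomial.C Λ * P n t = P n t * Polynomial.C Λ)
    (hdiff : ∀ (n k : ℕ) (i j : Fin N),
      DifferentiableOn ℝ (fun t => ((P n t).coeff k) i j) I)
    (hDUI : ∀ p q : ℝ → Polynomial (Matrix (Fin N) (Fin N) ℂ),
      (∀ (k : ℕ) (i j : Fin N), DifferentiableOn ℝ (fun t => ((p t).coeff k) i j) I) →
      (∀ (k : ℕ) (i j : Fin N), DifferentiableOn ℝ (fun t => ((q t).coeff k) i j) I) →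
      (∃ dp : ℕ, ∀ t ∈ I, (p t).natDegree ≤ dp) →
      (∃ dq : ℕ, ∀ t ∈ I, (q t).natDegree ≤ dq) →
      ∀ t ∈ I, ∀ i j : Fin N,
        HasDerivAt
          (fun s : ℝ => ∫ x : ℝ,
            (evalM (p s) x * defWeight Λ W s x * (evalM (q s) x)ᴴ) i j ∂μ)
          (∫ x : ℝ,
            deriv (fun s : ℝ =>
              (evalM (p s) x * defWeight Λ W s x * (evalM (q s) x)ᴴ) i j) t ∂μ) t) :
    ∀ t ∈ I,
      (∀ (n : ℕ) (i j : Fin N),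
        HasDerivAt (fun s : ℝ => C (n + 1) s i j)
          ((Λ * (C (n + 1) t * B n t - B (n + 1) t * C (n + 1) t)) i j) t) ∧
      (∀ (n : ℕ) (i j : Fin N),
        HasDerivAt (fun s : ℝ => B n s i j)
          ((Λ * (C n t - C (n + 1) t)) i j) t) :=
  stmt_0_general N μ W Λ I hIopen hmom P hmonic H hHpos horth B C hC0 hrec0 hrec hcomm hdiff hDUI
end

section
/- For every x, the matrix L(x) is invertible and its inverse is given explicitly by (L(x)^{−1})_{m,n} = i^{m−n} H_{m−n}(ix)/(m−n)! for m ≥ n and (L(x)^{−1})_{m,n} = 0 for m < n. Moreover, (dL/dx)(x) = A L(x) = L(x) A, where A = 2 ∑_{j=2}^N E_{j,j−1}. -/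
open Polynomial Matrix MeasureTheory

/-- Physicists' Hermite polynomials `H_n`, with generating function `exp (2xt - t²)`;
equivalently `H_0 = 1`, `H_{n+1}(x) = 2x H_n(x) - H_n'(x)`. -/
noncomputable def physHermite : ℕ → Polynomial ℂ
  | 0 => 1
  | n + 1 => Polynomial.C 2 * Polynomial.X * physHermite n -
      Polynomial.derivative (physHermite n)

/-- The lower triangular matrix `L(x)` with entries `L(x)_{m,n} = H_{m-n}(x)/(m-n)!`. -/
noncomputable def Lmat (N : ℕ) (z : ℂ) : Matrix (Fin N) (Fin N) ℂ :=
  Matrix.of fun m n =>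
    if (n : ℕ) ≤ (m : ℕ) then
      (physHermite ((m : ℕ) - (n : ℕ))).eval z / (Nat.factorial ((m : ℕ) - (n : ℕ)) : ℂ)
    else 0

/-- The matrix `A = 2 ∑_{j=2}^N E_{j,j-1}`. -/
def Amat (N : ℕ) : Matrix (Fin N) (Fin N) ℂ :=
  Matrix.of fun m n => if (m : ℕ) = (n : ℕ) + 1 then 2 else 0

/-- The diagonal matrix `J = diag(1, 2, …, N)`. -/
def Jmat (N : ℕ) : Matrix (Fin N) (Fin N) ℂ :=
  Matrix.diagonal fun k => ((k : ℕ) + 1 : ℂ)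

/-- `S^α = diag(α_1, …, α_N)`. -/
noncomputable def Smat {N : ℕ} (α : Fin N → ℝ) : Matrix (Fin N) (Fin N) ℂ :=
  Matrix.diagonal fun k => (α k : ℂ)

/-- `L^α(x) = S^α L(x) (S^α)⁻¹`. -/
noncomputable def LmatAlpha {N : ℕ} (α : Fin N → ℝ) (x : ℝ) : Matrix (Fin N) (Fin N) ℂ :=
  Smat α * Lmat N (x : ℂ) * (Smat α)⁻¹

/-- `A^α = S^α A (S^α)⁻¹`. -/
noncomputable def AmatAlpha {N : ℕ} (α : Fin N → ℝ) : Matrix (Fin N) (Fin N) ℂ :=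
  Smat α * Amat N * (Smat α)⁻¹

/-- The weight `W^{(α,ν)}(x) = e^{-x²} L^α(x) Δ (L^α(x))^*` where `Δ = diag(δ_1, …, δ_N)`. -/
noncomputable def Wmat {N : ℕ} (α : Fin N → ℝ) (δ : Fin N → ℝ) (x : ℝ) :
    Matrix (Fin N) (Fin N) ℂ :=
  (Real.exp (-x ^ 2) : ℂ) •
    (LmatAlpha α x * Matrix.diagonal (fun k => (δ k : ℂ)) * (LmatAlpha α x)ᴴ)

/-- Entrywise integral over `ℝ` (Lebesgue measure) of a matrix-valued function. -/
noncomputable def mInt {N : ℕ} (f : ℝ → Matrix (Fin N) (Fin N) ℂ) :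
    Matrix (Fin N) (Fin N) ℂ :=
  Matrix.of fun i j => ∫ x : ℝ, f x i j

/-- Rising factorial (Pochhammer symbol) `(a)_k = a (a+1) ⋯ (a+k-1)`. -/
noncomputable def risingFactorial (a : ℂ) (k : ℕ) : ℂ :=
  ∏ i ∈ Finset.range k, (a + i)

/-- `P` is the monic matrix-valued orthogonal polynomial of degree `n`
for the weight `Wf`: it is monic of degree `n` and `∫ P(x) Wf(x) xᵖ dx = 0` for `p < n`. -/
def IsMonicOrthPoly {N : ℕ} (Wf : ℝ → Matrix (Fin N) (Fin N) ℂ) (n : ℕ)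
    (P : Polynomial (Matrix (Fin N) (Fin N) ℂ)) : Prop :=
  P.Monic ∧ P.natDegree = n ∧
    ∀ p < n, mInt (fun x => (x : ℂ) ^ p • (evalM P x * Wf x)) = 0

/-!
`L(x)` is the matrix of multiplication by the exponential generating function
`Fₓ(t) = ∑ Hₙ(x) tⁿ / n! = exp (2xt - t²)` on `ℂ⟦t⟧ ⧸ (t ^ N)`, so products of such matrices
are computed by multiplying power series. The claimed inverse is the matrix of
`F_{ix}(it) = exp (-2xt + t²) = 1 / Fₓ(t)`, and `A` is the matrix of `2t`; hence `AL = LA`, and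
`L' = AL` because `∂ₓ Fₓ = 2t Fₓ`, i.e. `Hₙ' = 2n Hₙ₋₁`.

The identity `Fₓ(t) F_{ix}(it) = 1` is checked coefficientwise: `Hₙ` and `iⁿ Hₙ(iX)` satisfy
`Pₙ₊₁ = ±2X Pₙ - Pₙ'`, and by the Leibniz rule the binomial convolution of two sequences with
`Pₙ₊₁ = a Pₙ - D Pₙ`, `Qₙ₊₁ = b Qₙ - D Qₙ` satisfies the same recursion with multiplier `a + b`,
here `0`.
-/

open Finset

section BinomialConvolution

variable {R A : Type*} [CommSemiring R] [CommRing A] [Algebra R A]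

def binomialConv (P Q : ℕ → A) (d : ℕ) : A :=
  ∑ ij ∈ antidiagonal d, (d.choose ij.1 : A) * (P ij.1 * Q ij.2)

theorem binomialConv_succ (D : Derivation R A A) {a b : A} {P Q : ℕ → A}
    (hP : ∀ n, P (n + 1) = a * P n - D (P n)) (hQ : ∀ n, Q (n + 1) = b * Q n - D (Q n))
    (d : ℕ) :
    binomialConv P Q (d + 1) = (a + b) * binomialConv P Q d - D (binomialConv P Q d) := by
  have hterm : ∀ i j,
      (a + b) * (P i * Q j) - D (P i * Q j) = P i * Q (j + 1) + P (i + 1) * Q j := by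
    intro i j
    rw [hP, hQ, Derivation.leibniz, smul_eq_mul, smul_eq_mul]
    ring
  rw [binomialConv, sum_antidiagonal_choose_succ_mul (fun i j => P i * Q j), binomialConv,
    mul_sum, map_sum, ← sum_sub_distrib, ← sum_add_distrib]
  refine sum_congr rfl fun ij hij => ?_
  rw [Nat.choose_symm_of_eq_add (mem_antidiagonal.mp hij).symm, Derivation.leibniz,
    Derivation.map_natCast, smul_zero, add_zero, smul_eq_mul, ← mul_add, ← hterm]
  ring

theorem binomialConv_eq_zero (D : Derivation R A A) {a : A} {P Q : ℕ → A} (hP0 : P 0 = 1)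
    (hQ0 : Q 0 = 1) (hP : ∀ n, P (n + 1) = a * P n - D (P n))
    (hQ : ∀ n, Q (n + 1) = -a * Q n - D (Q n)) {d : ℕ} (hd : d ≠ 0) :
    binomialConv P Q d = 0 := by
  obtain ⟨d, rfl⟩ := Nat.exists_eq_add_one_of_ne_zero hd
  have hsucc := binomialConv_succ D hP hQ
  simp only [add_neg_cancel, zero_mul, zero_sub] at hsucc
  induction d with
  | zero => rw [hsucc, binomialConv, Nat.antidiagonal_zero, sum_singleton, hP0, hQ0]; simp
  | succ d ih => rw [hsucc, ih d.succ_ne_zero, map_zero, neg_zero]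

end BinomialConvolution

section Hermite

open Complex (I)

theorem physHermite_succ (n : ℕ) :
    physHermite (n + 1) = C 2 * X * physHermite n - derivative (physHermite n) := rfl

theorem derivative_physHermite_succ :
    ∀ n : ℕ, derivative (physHermite (n + 1)) = C (2 * (n + 1) : ℂ) * physHermite n
  | 0 => by simp [physHermite]
  | n + 1 => by
    rw [physHermite_succ (n + 1), derivative_sub, derivative_mul, derivative_mul, derivative_C,
      derivative_X, derivative_physHermite_succ n, derivative_mul, derivative_C,
      physHermite_succ n]
    simp only [map_mul, map_add, map_one, map_ofNat, map_natCast, Nat.cast_add, Nat.cast_one]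
    ring

noncomputable def physHermiteI (n : ℕ) : ℂ[X] :=
  C (I ^ n) * (physHermite n).comp (C I * X)

theorem eval_physHermiteI (n : ℕ) (z : ℂ) :
    (physHermiteI n).eval z = I ^ n * (physHermite n).eval (I * z) := by
  simp [physHermiteI, eval_comp]

theorem physHermiteI_succ (n : ℕ) :
    physHermiteI (n + 1) = -(C 2 * X) * physHermiteI n - derivative (physHermiteI n) := by
  have hI : (C I : ℂ[X]) * C I = -1 := by rw [← C_mul, Complex.I_mul_I, map_neg, map_one]
  have hcomp : derivative ((physHermite n).comp (C I * X)) =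
      C I * (derivative (physHermite n)).comp (C I * X) := by
    rw [derivative_comp, derivative_mul, derivative_C, derivative_X]
    ring
  rw [physHermiteI, physHermiteI, physHermite_succ, sub_comp, mul_comp, mul_comp, C_comp, X_comp,
    derivative_mul, derivative_C, hcomp]
  simp only [pow_succ, map_mul]
  linear_combination (C 2 * X * C (I ^ n) * (physHermite n).comp (C I * X)) * hI

theorem binomialConv_physHermite_physHermiteI {d : ℕ} (hd : d ≠ 0) :
    binomialConv physHermite physHermiteI d = 0 :=
  binomialConv_eq_zero (derivative' (R := ℂ)) (a := C 2 * X) rfl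
    (by simp [physHermiteI, physHermite]) physHermite_succ physHermiteI_succ hd

noncomputable def physHermiteEGF (z : ℂ) : PowerSeries ℂ :=
  PowerSeries.mk fun n => (physHermite n).eval z / n.factorial

theorem coeff_physHermiteEGF (n : ℕ) (z : ℂ) :
    PowerSeries.coeff n (physHermiteEGF z) = (physHermite n).eval z / n.factorial :=
  PowerSeries.coeff_mk _ _

theorem physHermiteEGF_mul_rescale (z : ℂ) :
    physHermiteEGF z * PowerSeries.rescale I (physHermiteEGF (I * z)) = 1 := by
  ext d
  have hterm : ∀ ij ∈ antidiagonal d,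
      PowerSeries.coeff ij.1 (physHermiteEGF z) *
        PowerSeries.coeff ij.2 (PowerSeries.rescale I (physHermiteEGF (I * z))) =
      (d.choose ij.1 * ((physHermite ij.1).eval z * (physHermiteI ij.2).eval z)) /
        d.factorial := by
    rintro ⟨i, j⟩ hij
    obtain rfl : i + j = d := mem_antidiagonal.mp hij
    have hfac : ((i + j).choose i * i.factorial * j.factorial : ℂ) = (i + j).factorial := by
      have := Nat.choose_mul_factorial_mul_factorial (Nat.le_add_right i j)
      rw [Nat.add_sub_cancel_left] at this
      exact_mod_cast this
    have hchoose : ((i + j).choose i : ℂ) ≠ 0 := by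
      exact_mod_cast (Nat.choose_pos (Nat.le_add_right i j)).ne'
    simp only [coeff_physHermiteEGF, PowerSeries.coeff_rescale, eval_physHermiteI]
    rw [← hfac]
    field_simp
  rw [PowerSeries.coeff_mul, sum_congr rfl hterm, ← sum_div, PowerSeries.coeff_one]
  split_ifs with hd
  · subst hd
    simp [physHermite, physHermiteI]
  · have := congrArg (eval z) (binomialConv_physHermite_physHermiteI hd)
    simp only [binomialConv, eval_finsetSum, eval_mul, eval_natCast, eval_zero] at this
    rw [this, zero_div]

theorem hasDerivAt_coeff_physHermiteEGF (k : ℕ) (x : ℝ) :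
    HasDerivAt (fun y : ℝ => PowerSeries.coeff k (physHermiteEGF y))
      (PowerSeries.coeff k (PowerSeries.C 2 * PowerSeries.X * physHermiteEGF x)) x := by
  cases k with
  | zero => simpa [coeff_physHermiteEGF, physHermite] using hasDerivAt_const x (1 : ℂ)
  | succ k =>
    simp only [mul_assoc, PowerSeries.coeff_C_mul, PowerSeries.coeff_succ_X_mul,
      coeff_physHermiteEGF]
    refine (((physHermite (k + 1)).hasDerivAt (x : ℂ)).comp_ofReal.div_const _).congr_deriv ?_
    have hk : (k.factorial : ℂ) ≠ 0 := by exact_mod_cast k.factorial_ne_zero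
    rw [derivative_physHermite_succ, eval_mul, eval_C, Nat.factorial_succ]
    push_cast
    field_simp

end Hermite

section LowerToeplitz

variable {R : Type*} [Semiring R]

/-- The matrix of multiplication by `f` on `R⟦X⟧ ⧸ (X ^ N)` in the basis `1, X, …, X ^ (N - 1)`. -/
noncomputable def lowerToeplitz (N : ℕ) (f : PowerSeries R) : Matrix (Fin N) (Fin N) R :=
  Matrix.of fun m n => if (n : ℕ) ≤ m then PowerSeries.coeff ((m : ℕ) - n) f else 0

theorem lowerToeplitz_mul (N : ℕ) (f g : PowerSeries R) :
    lowerToeplitz N f * lowerToeplitz N g = lowerToeplitz N (f * g) := by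
  ext m n
  simp only [lowerToeplitz, mul_apply, of_apply, PowerSeries.coeff_mul, mul_ite, ite_mul,
    zero_mul, mul_zero]
  split_ifs with hnm
  · rw [← sum_filter, ← sum_filter]
    refine sum_bij' (fun k _ => ((m : ℕ) - k, (k : ℕ) - n))
      (fun p hp => ⟨n + p.2, by have := HasAntidiagonal.mem_antidiagonal.mp hp; omega⟩)
      ?_ ?_ ?_ ?_ fun _ _ => rfl
    all_goals
      simp only [mem_filter, mem_univ, true_and, HasAntidiagonal.mem_antidiagonal, Fin.ext_iff,
        Prod.ext_iff]
      intros
      omega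
  · refine sum_eq_zero fun k _ => ?_
    split_ifs <;> first | rfl | omega

theorem lowerToeplitz_one (N : ℕ) : lowerToeplitz N (1 : PowerSeries R) = 1 := by
  ext m n
  simp only [lowerToeplitz, of_apply, PowerSeries.coeff_one, one_apply, Fin.ext_iff]
  split_ifs <;> first | rfl | omega

theorem hasDerivAt_lowerToeplitz_apply {𝕜 F : Type*} [NontriviallyNormedField 𝕜] [NormedRing F]
    [NormedSpace 𝕜 F] {N : ℕ} {f : 𝕜 → PowerSeries F} {f' : PowerSeries F} {x : 𝕜}
    (hf : ∀ k, HasDerivAt (fun y => PowerSeries.coeff k (f y)) (PowerSeries.coeff k f') x)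
    (m n : Fin N) :
    HasDerivAt (fun y => lowerToeplitz N (f y) m n) (lowerToeplitz N f' m n) x := by
  simp only [lowerToeplitz, of_apply]
  split_ifs
  · exact hf _
  · exact hasDerivAt_const x 0

end LowerToeplitz

theorem Lmat_eq_lowerToeplitz (N : ℕ) (z : ℂ) :
    Lmat N z = lowerToeplitz N (physHermiteEGF z) := by
  ext m n
  simp [Lmat, lowerToeplitz, coeff_physHermiteEGF]

theorem Amat_eq_lowerToeplitz (N : ℕ) :
    Amat N = lowerToeplitz N (PowerSeries.C 2 * PowerSeries.X) := by
  ext m n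
  simp only [Amat, lowerToeplitz, of_apply, PowerSeries.coeff_C_mul, PowerSeries.coeff_X]
  split_ifs <;> first | omega | simp

theorem stmt_2_general (N : ℕ) (x : ℝ) :
    IsUnit (Lmat N (x : ℂ)) ∧
    (Lmat N (x : ℂ))⁻¹ = Matrix.of (fun m n : Fin N =>
      if (n : ℕ) ≤ (m : ℕ) then
        Complex.I ^ ((m : ℕ) - (n : ℕ)) *
          (physHermite ((m : ℕ) - (n : ℕ))).eval (Complex.I * (x : ℂ)) /
          (Nat.factorial ((m : ℕ) - (n : ℕ)) : ℂ)
      else 0) ∧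
    (∀ m n : Fin N, HasDerivAt (fun y : ℝ => Lmat N (y : ℂ) m n)
      ((Amat N * Lmat N (x : ℂ)) m n) x) ∧
    Amat N * Lmat N (x : ℂ) = Lmat N (x : ℂ) * Amat N := by
  have hinv : Lmat N x * lowerToeplitz N
      (PowerSeries.rescale Complex.I (physHermiteEGF (Complex.I * x))) = 1 := by
    rw [Lmat_eq_lowerToeplitz, lowerToeplitz_mul, physHermiteEGF_mul_rescale, lowerToeplitz_one]
  refine ⟨.of_mul_eq_one _ hinv, (inv_eq_right_inv hinv).trans ?_, fun m n => ?_, ?_⟩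
  · ext m n
    simp only [lowerToeplitz, of_apply, PowerSeries.coeff_rescale, coeff_physHermiteEGF,
      mul_div_assoc]
  · simp only [Lmat_eq_lowerToeplitz, Amat_eq_lowerToeplitz, lowerToeplitz_mul]
    exact hasDerivAt_lowerToeplitz_apply (hasDerivAt_coeff_physHermiteEGF · x) m n
  · rw [Amat_eq_lowerToeplitz, Lmat_eq_lowerToeplitz, lowerToeplitz_mul, lowerToeplitz_mul,
      mul_comm]

/-- Proposition 2.1: `L(x)` is invertible with explicit inverse given by Hermite
polynomials on the imaginary axis, and `L'(x) = A L(x) = L(x) A`. -/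
theorem stmt_2 (N : ℕ) (hN : 1 ≤ N) (x : ℝ) :
    IsUnit (Lmat N (x : ℂ)) ∧
    (Lmat N (x : ℂ))⁻¹ = Matrix.of (fun m n : Fin N =>
      if (n : ℕ) ≤ (m : ℕ) then
        Complex.I ^ ((m : ℕ) - (n : ℕ)) *
          (physHermite ((m : ℕ) - (n : ℕ))).eval (Complex.I * (x : ℂ)) /
          (Nat.factorial ((m : ℕ) - (n : ℕ)) : ℂ)
      else 0) ∧
    (∀ m n : Fin N, HasDerivAt (fun y : ℝ => Lmat N (y : ℂ) m n)
      ((Amat N * Lmat N (x : ℂ)) m n) x) ∧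
    Amat N * Lmat N (x : ℂ) = Lmat N (x : ℂ) * Amat N :=
  stmt_2_general N x
end

section
/- The zeroth moment ∫_ℝ W^{(α,ν)}(x) dx is a diagonal matrix whose (m,m) entry equals α_m² δ_1^{(ν)} 2^{m−1} √π (−N − c^{(ν)}/d^{(ν)})_{m−1} / ( (m−1)! (1−N)_{m−1} ); in particular this matrix is invertible. -/
open Polynomial Matrix MeasureTheory

/-!
Conjugating by `S^α` and expanding `L^α(x) Δ L^α(x)^*`, the `(i, j)` entry of `W(x)` is
`e^{-x²} ∑_{k ≤ i, j} α_i α_j (δ_k / α_k²) H_{i-k}(x) H_{j-k}(x) / ((i-k)! (j-k)!)`.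
Gaussian integration by parts gives `∫ H_{n+1} q e^{-x²} = ∫ H_n q' e^{-x²}`, hence the
orthogonality `∫ H_a H_b e^{-x²} = √π 2^a a! [a = b]`, so the zeroth moment is diagonal with
`(m, m)` entry `α_m² √π ∑_{k ≤ m} (δ_k / α_k²) 2^{m-k} / (m-k)!`.  The relation between `α` and
`δ` is a first-order recursion for `δ_k / α_k²`, solved by
`δ_k / α_k² = δ_1 (-2)^k (1 + c/d)_k / (k! (1-N)_k)`; the diagonal entry then becomes a
terminating `₂F₁(-m, 1 + c/d; 1 - N; 1)`, which the Chu–Vandermonde identity evaluates.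
-/

open Finset

-- A real copy of `physHermite`: it shows that `L(x)` is real for real `x`, and lets the
-- integrations by parts take place over `ℝ`.
noncomputable def physHermiteReal : ℕ → ℝ[X]
  | 0 => 1
  | n + 1 => C 2 * X * physHermiteReal n - derivative (physHermiteReal n)

lemma physHermiteReal_zero : physHermiteReal 0 = 1 := rfl

lemma physHermiteReal_succ (n : ℕ) :
    physHermiteReal (n + 1) = C 2 * X * physHermiteReal n - derivative (physHermiteReal n) :=
  rfl

lemma derivative_physHermiteReal_succ (n : ℕ) :
    derivative (physHermiteReal (n + 1)) = C (2 * (n + 1) : ℝ) * physHermiteReal n := by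
  induction n with
  | zero => simp [physHermiteReal_succ, physHermiteReal_zero]
  | succ n ih =>
    rw [physHermiteReal_succ (n + 1), derivative_sub, derivative_mul, ih,
      physHermiteReal_succ n]
    simp only [derivative_mul, derivative_C, derivative_X]
    push_cast
    simp only [C_add, C_mul, C_1]
    ring

lemma physHermite_eq_map (n : ℕ) : physHermite n = (physHermiteReal n).map Complex.ofRealHom := by
  induction n with
  | zero => simp [physHermite, physHermiteReal_zero]
  | succ n ih =>
    simp [physHermite, physHermiteReal_succ, ih, derivative_map]

lemma physHermite_eval_ofReal (n : ℕ) (x : ℝ) :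
    (physHermite n).eval (x : ℂ) = (((physHermiteReal n).eval x : ℝ) : ℂ) := by
  rw [physHermite_eq_map, eval_map, ← Complex.ofRealHom_eq_coe, eval₂_at_apply]
  rfl

lemma integrable_exp_neg_sq_mul_eval (p : ℝ[X]) :
    Integrable fun x : ℝ => Real.exp (-x ^ 2) * p.eval x := by
  simp_rw [eval_eq_sum_range, mul_sum]
  refine integrable_finsetSum _ fun i _ => ?_
  have h := integrable_rpow_mul_exp_neg_mul_sq one_pos (s := i)
    (by linarith [i.cast_nonneg (α := ℝ)])
  simp only [Real.rpow_natCast, neg_mul, one_mul] at h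
  refine (h.const_mul (p.coeff i)).congr (.of_forall fun x => ?_)
  ring

noncomputable def gaussMoment : ℝ[X] →ₗ[ℝ] ℝ where
  toFun p := ∫ x, Real.exp (-x ^ 2) * p.eval x
  map_add' p q := by
    simp only [eval_add, mul_add]
    exact integral_add (integrable_exp_neg_sq_mul_eval p) (integrable_exp_neg_sq_mul_eval q)
  map_smul' r p := by
    simp only [eval_smul, smul_eq_mul, RingHom.id_apply, ← integral_const_mul]
    congr 1 with x
    ring

lemma gaussMoment_apply (p : ℝ[X]) : gaussMoment p = ∫ x, Real.exp (-x ^ 2) * p.eval x := rfl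

lemma gaussMoment_one : gaussMoment 1 = √Real.pi := by
  simpa [gaussMoment_apply] using integral_gaussian 1

lemma gaussMoment_derivative (p : ℝ[X]) :
    gaussMoment (derivative p) = gaussMoment (C 2 * X * p) := by
  have hderiv (x : ℝ) : HasDerivAt (fun y => Real.exp (-y ^ 2) * p.eval y)
      (Real.exp (-x ^ 2) * (derivative p - C 2 * X * p).eval x) x := by
    refine (((hasDerivAt_pow 2 x).neg.exp).mul (p.hasDerivAt x)).congr_deriv ?_
    simp only [eval_sub, eval_mul, eval_C, eval_X, Pi.neg_apply]
    push_cast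
    ring
  have h := integral_eq_zero_of_hasDerivAt_of_integrable hderiv
    (integrable_exp_neg_sq_mul_eval _) (integrable_exp_neg_sq_mul_eval p)
  rwa [← gaussMoment_apply, map_sub, sub_eq_zero] at h

lemma gaussMoment_physHermiteReal_succ_mul (n : ℕ) (q : ℝ[X]) :
    gaussMoment (physHermiteReal (n + 1) * q) =
      gaussMoment (physHermiteReal n * derivative q) := by
  have h := gaussMoment_derivative (physHermiteReal n * q)
  rw [derivative_mul, map_add] at h
  rw [physHermiteReal_succ, sub_mul, map_sub, mul_assoc, ← h]
  ring

lemma gaussMoment_physHermiteReal_mul (a b : ℕ) :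
    gaussMoment (physHermiteReal a * physHermiteReal b) =
      if a = b then √Real.pi * 2 ^ a * a.factorial else 0 := by
  induction a generalizing b with
  | zero =>
    cases b with
    | zero => simp [physHermiteReal_zero, gaussMoment_one]
    | succ m =>
      rw [mul_comm, gaussMoment_physHermiteReal_succ_mul, physHermiteReal_zero]
      simp
  | succ n ih =>
    rw [gaussMoment_physHermiteReal_succ_mul]
    cases b with
    | zero => simp [physHermiteReal_zero]
    | succ m =>
      rw [derivative_physHermiteReal_succ, mul_left_comm, ← smul_eq_C_mul, map_smul, ih,
        smul_eq_mul]
      by_cases h : n = m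
      · subst h
        simp only [if_true, Nat.factorial_succ]
        push_cast
        ring
      · simp [h]

lemma risingFactorial_succ (a : ℂ) (n : ℕ) :
    risingFactorial a (n + 1) = risingFactorial a n * (a + n) :=
  prod_range_succ _ _

lemma risingFactorial_add (a : ℂ) (m n : ℕ) :
    risingFactorial a (m + n) = risingFactorial a m * risingFactorial (a + m) n := by
  simp only [risingFactorial, prod_range_add, Nat.cast_add, add_assoc]

lemma risingFactorial_eq_eval_ascPochhammer (a : ℂ) (n : ℕ) :
    risingFactorial a n = (ascPochhammer ℂ n).eval a := by
  induction n with
  | zero => simp [risingFactorial]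
  | succ n ih => rw [risingFactorial_succ, ih, ascPochhammer_succ_eval]

lemma risingFactorial_eq_smeval_descPochhammer (a : ℂ) (n : ℕ) :
    risingFactorial a n = (descPochhammer ℤ n).smeval (a + n - 1) := by
  rw [descPochhammer_smeval_eq_ascPochhammer, ascPochhammer_smeval_eq_eval,
    risingFactorial_eq_eval_ascPochhammer]
  ring_nf

lemma neg_one_pow_mul_risingFactorial (a : ℂ) (n : ℕ) :
    (-1) ^ n * risingFactorial a n = (descPochhammer ℤ n).smeval (-a) := by
  rw [risingFactorial_eq_eval_ascPochhammer, ← ascPochhammer_smeval_eq_eval, ← neg_neg a,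
    ascPochhammer_smeval_neg_eq_descPochhammer, neg_neg, Units.smul_def, zsmul_eq_mul,
    ← mul_assoc]
  norm_num [Int.cast_negOnePow_natCast, ← mul_pow]

lemma sum_antidiagonal_choose_mul_risingFactorial (a b : ℂ) (m : ℕ) :
    ∑ ij ∈ antidiagonal m, (m.choose ij.1 : ℂ) *
      ((-1) ^ ij.1 * risingFactorial a ij.1 * risingFactorial (b + ij.1) ij.2) =
        risingFactorial (b - a) m := by
  rw [risingFactorial_eq_smeval_descPochhammer,
    show b - a + m - 1 = -a + (b + m - 1) by ring,
    Ring.descPochhammer_smeval_add _ (Commute.all _ _)]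
  refine sum_congr rfl fun ij hij => ?_
  rw [HasAntidiagonal.mem_antidiagonal] at hij
  rw [neg_one_pow_mul_risingFactorial, risingFactorial_eq_smeval_descPochhammer, ← hij]
  push_cast
  ring_nf

lemma sum_range_div_risingFactorial (a b : ℂ) {m : ℕ} (hb : risingFactorial b m ≠ 0) :
    ∑ k ∈ range (m + 1), (-1) ^ k * risingFactorial a k /
        (k.factorial * risingFactorial b k * (m - k).factorial) =
      risingFactorial (b - a) m / (m.factorial * risingFactorial b m) := by
  rw [eq_div_iff (mul_ne_zero (Nat.cast_ne_zero.2 m.factorial_ne_zero) hb),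
    ← sum_antidiagonal_choose_mul_risingFactorial, sum_mul,
    Finset.Nat.sum_antidiagonal_eq_sum_range_succ
      (fun i j => (m.choose i : ℂ) * ((-1) ^ i * risingFactorial a i * risingFactorial (b + i) j))]
  refine sum_congr rfl fun k hk => ?_
  have hkm : k ≤ m := Nat.lt_succ_iff.1 (mem_range.1 hk)
  have hsplit := risingFactorial_add b k (m - k)
  rw [Nat.add_sub_of_le hkm] at hsplit
  rw [hsplit] at hb ⊢
  have hfact : (m.factorial : ℂ) = m.choose k * k.factorial * (m - k).factorial := by
    exact_mod_cast (Nat.choose_mul_factorial_mul_factorial hkm).symm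
  have := k.factorial_ne_zero
  have := (m - k).factorial_ne_zero
  rw [hfact]
  field_simp [left_ne_zero_of_mul hb, right_ne_zero_of_mul hb]

lemma prod_range_neg_two_mul_div_eq_risingFactorial (a b : ℂ) (k : ℕ) :
    ∏ j ∈ range k, (-2 * (a + j) / ((j + 1) * (b + j))) =
      (-2) ^ k * risingFactorial a k / (k.factorial * risingFactorial b k) := by
  rw [prod_div_distrib, prod_mul_distrib, prod_mul_distrib, prod_const, card_range,
    ← prod_range_add_one_eq_factorial]
  push_cast
  rfl

lemma risingFactorial_ne_zero_of_re_add_lt_one {a : ℂ} {k : ℕ} (h : a.re + k < 1) :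
    risingFactorial a k ≠ 0 := by
  refine prod_ne_zero_iff.2 fun i hi hzero => ?_
  have hik : (i : ℝ) + 1 ≤ k := by exact_mod_cast mem_range.1 hi
  have hre := congrArg Complex.re hzero
  simp only [Complex.add_re, Complex.natCast_re, Complex.zero_re] at hre
  linarith

lemma sum_fin_ite_le_eq_sum_range {M : Type*} [AddCommMonoid M] {N : ℕ} (m : Fin N)
    (f : ℕ → M) : ∑ k : Fin N, (if (k : ℕ) ≤ m then f k else 0) = ∑ k ∈ range (m + 1), f k := by
  rw [Fin.sum_univ_eq_sum_range (fun k => if k ≤ m then f k else 0), ← sum_filter]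
  congr 1
  ext k
  simp only [mem_filter, mem_range]
  omega

lemma eq_mul_prod_range_of_succ_eq_mul {M : Type*} [CommMonoid M] {N : ℕ} {β : Fin N → M}
    {r : ℕ → M} (h : ∀ j (hj : j + 1 < N), β ⟨j + 1, hj⟩ = β ⟨j, by omega⟩ * r j) (k : Fin N) :
    β k = β ⟨0, k.pos⟩ * ∏ j ∈ range k, r j := by
  obtain ⟨k, hk⟩ := k
  induction k with
  | zero => simp
  | succ k ih => rw [h k hk, ih, prod_range_succ, mul_assoc]

section WeightMatrix

variable {N : ℕ} (α δ : Fin N → ℝ)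

noncomputable def LpolyAlpha : Matrix (Fin N) (Fin N) ℝ[X] :=
  of fun m k => if (k : ℕ) ≤ m then
    C (α m / α k / ((m : ℕ) - k).factorial) * physHermiteReal (m - k) else 0

noncomputable def WpolyAlpha : Matrix (Fin N) (Fin N) ℝ[X] :=
  LpolyAlpha α * diagonal (fun k => C (δ k)) * (LpolyAlpha α)ᵀ

variable {α}

lemma Smat_inv (hα : ∀ k, α k ≠ 0) : (Smat α)⁻¹ = diagonal fun k => (α k : ℂ)⁻¹ := by
  refine inv_eq_right_inv ?_
  rw [Smat, diagonal_mul_diagonal, ← diagonal_one]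
  congr with k
  exact mul_inv_cancel₀ (Complex.ofReal_ne_zero.2 (hα k))

lemma LmatAlpha_eq_map (hα : ∀ k, α k ≠ 0) (x : ℝ) :
    LmatAlpha α x = (LpolyAlpha α).map fun p => ((p.eval x : ℝ) : ℂ) := by
  ext m k
  rw [LmatAlpha, Smat_inv hα, mul_diagonal, Smat, diagonal_mul, Lmat, map_apply, LpolyAlpha]
  simp only [of_apply]
  split_ifs
  · rw [physHermite_eval_ofReal, eval_mul, eval_C]
    push_cast
    ring
  · simp

lemma Wmat_eq_map (hα : ∀ k, α k ≠ 0) (x : ℝ) :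
    Wmat α δ x = (WpolyAlpha α δ).map fun p => ((Real.exp (-x ^ 2) * p.eval x : ℝ) : ℂ) := by
  let φ : ℝ[X] →+* ℂ := Complex.ofRealHom.comp (evalRingHom x)
  have hL : LmatAlpha α x = (LpolyAlpha α).map φ := LmatAlpha_eq_map hα x
  have hLstar : (LmatAlpha α x)ᴴ = (LpolyAlpha α)ᵀ.map φ := by
    rw [hL, conjTranspose, transpose_map, Matrix.map_map]
    congr with p
    exact Complex.conj_ofReal _
  have hΔ : diagonal (fun k => (δ k : ℂ)) = (diagonal fun k => C (δ k)).map φ := by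
    rw [diagonal_map (map_zero φ)]
    simp [φ]
  rw [Wmat, hLstar, hL, hΔ, ← Matrix.map_mul, ← Matrix.map_mul]
  ext i j
  simp [φ, WpolyAlpha]

lemma mInt_Wmat (hα : ∀ k, α k ≠ 0) :
    mInt (fun x => Wmat α δ x) = (WpolyAlpha α δ).map fun p => ((gaussMoment p : ℝ) : ℂ) := by
  ext i j
  simp only [mInt, of_apply, map_apply, Wmat_eq_map δ hα, gaussMoment_apply]
  exact integral_ofReal

variable (α)

lemma gaussMoment_LpolyAlpha_mul (i j k : Fin N) :
    gaussMoment (LpolyAlpha α i k * LpolyAlpha α j k) =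
      if i = j ∧ (k : ℕ) ≤ i then
        α i ^ 2 / α k ^ 2 * √Real.pi * 2 ^ ((i : ℕ) - k) / ((i : ℕ) - k).factorial else 0 := by
  simp only [LpolyAlpha, of_apply]
  by_cases hki : (k : ℕ) ≤ i
  swap
  · simp [hki]
  by_cases hkj : (k : ℕ) ≤ j
  swap
  · have hij : i ≠ j := fun h => hkj (h ▸ hki)
    simp [hki, hkj, hij]
  simp only [hki, hkj, if_true, and_true]
  rw [mul_mul_mul_comm, ← C_mul, ← smul_eq_C_mul, map_smul, gaussMoment_physHermiteReal_mul]
  by_cases hij : i = j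
  · subst hij
    have := ((i : ℕ) - k).factorial_ne_zero
    simp only [if_true, smul_eq_mul]
    field_simp
  · have : (i : ℕ) - k ≠ (j : ℕ) - k := by omega
    simp [hij, this]

variable {α}

lemma mInt_Wmat_eq_diagonal (hα : ∀ k, α k ≠ 0) :
    mInt (fun x => Wmat α δ x) = diagonal fun m => (α m : ℂ) ^ 2 * √Real.pi *
      ∑ k : Fin N, if (k : ℕ) ≤ m then
        (δ k : ℂ) / (α k : ℂ) ^ 2 * 2 ^ ((m : ℕ) - k) / ((m : ℕ) - k).factorial else 0 := by
  rw [mInt_Wmat δ hα]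
  ext i j
  have hentry (k : Fin N) : (LpolyAlpha α * diagonal fun k => C (δ k)) i k * LpolyAlpha α j k =
      δ k • (LpolyAlpha α i k * LpolyAlpha α j k) := by
    rw [mul_diagonal, smul_eq_C_mul]
    ring
  rw [map_apply, WpolyAlpha, mul_apply]
  simp only [transpose_apply, hentry, map_sum, map_smul, gaussMoment_LpolyAlpha_mul,
    diagonal_apply]
  by_cases hij : i = j
  · subst hij
    simp only [true_and, if_true, smul_eq_mul, mul_sum]
    push_cast
    refine sum_congr rfl fun k _ => ?_
    split_ifs
    · push_cast
      ring
    · simp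
  · simp [hij]

end WeightMatrix

lemma mInt_Wmat_eq_diagonal_of_div_sq_eq {N : ℕ} {α : Fin N → ℝ} (δ : Fin N → ℝ)
    (hα : ∀ k, α k ≠ 0) {c₀ a b : ℂ} (hb : ∀ m : Fin N, risingFactorial b m ≠ 0)
    (hβ : ∀ k : Fin N, (δ k : ℂ) / (α k : ℂ) ^ 2 =
      c₀ * ((-2) ^ (k : ℕ) * risingFactorial a k / ((k : ℕ).factorial * risingFactorial b k))) :
    mInt (fun x => Wmat α δ x) = diagonal fun m : Fin N =>
      (α m : ℂ) ^ 2 * c₀ * 2 ^ (m : ℕ) * (√Real.pi : ℂ) *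
        risingFactorial (b - a) m / ((m : ℕ).factorial * risingFactorial b m) := by
  rw [mInt_Wmat_eq_diagonal δ hα]
  congr with m
  simp only [hβ]
  rw [sum_fin_ite_le_eq_sum_range m (fun k => c₀ * ((-2) ^ k * risingFactorial a k /
      (k.factorial * risingFactorial b k)) * 2 ^ ((m : ℕ) - k) / ((m : ℕ) - k).factorial),
    mul_div_assoc, ← sum_range_div_risingFactorial a b (hb m), mul_sum, mul_sum]
  refine sum_congr rfl fun k hk => ?_
  rw [← pow_mul_pow_sub (2 : ℂ) (Nat.lt_succ_iff.1 (mem_range.1 hk)), neg_pow]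
  ring

lemma isUnit_diagonal_moment {N : ℕ} {α : Fin N → ℝ} (hα : ∀ k, α k ≠ 0) {c₀ a b : ℂ}
    (hc₀ : c₀ ≠ 0) (hab : ∀ m : Fin N, risingFactorial (b - a) m ≠ 0)
    (hb : ∀ m : Fin N, risingFactorial b m ≠ 0) :
    IsUnit (diagonal fun m : Fin N => (α m : ℂ) ^ 2 * c₀ * 2 ^ (m : ℕ) * (√Real.pi : ℂ) *
      risingFactorial (b - a) m / ((m : ℕ).factorial * risingFactorial b m)) := by
  refine isUnit_diagonal.2 (Pi.isUnit_iff.2 fun m => isUnit_iff_ne_zero.2 ?_)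
  have hα' : (α m : ℂ) ≠ 0 := Complex.ofReal_ne_zero.2 (hα m)
  have hπ : (√Real.pi : ℂ) ≠ 0 := Complex.ofReal_ne_zero.2 (Real.sqrt_pos.2 Real.pi_pos).ne'
  have := (m : ℕ).factorial_ne_zero
  have := hab m
  have := hb m
  simp [*]

lemma div_sq_succ_eq_of_sq_div_sq_eq {a₀ a₁ δ₀ δ₁ c d : ℝ} {j n : ℕ} (ha₀ : a₀ ≠ 0)
    (ha₁ : a₁ ≠ 0) (hδ₀ : δ₀ ≠ 0) (hc : 0 < c) (hd : 0 < d) (hj : j + 1 < n)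
    (h : a₁ ^ 2 / a₀ ^ 2 = d * (j + 1) * ((n : ℝ) - (j + 1)) * δ₁ / (2 * (d * (j + 1) + c) * δ₀)) :
    δ₁ / a₁ ^ 2 = δ₀ / a₀ ^ 2 * (-2 * (1 + c / d + j) / ((j + 1) * (1 - n + j))) := by
  have hnj : (j : ℝ) + 1 < n := by exact_mod_cast hj
  have : d * (j + 1) + c ≠ 0 := by positivity
  have : (1 : ℝ) - n + j ≠ 0 := by linarith
  field_simp at h ⊢
  linear_combination h

/-- Corollary 3.9: the zeroth moment
`∫ W^{(α,ν)}(x) dx = diag(α_m² δ_1 2^{m-1} √π (-N-c/d)_{m-1} / ((m-1)! (1-N)_{m-1}))`,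
an invertible (diagonal) matrix.  (The `Fin N` index `m` corresponds to paper index `m+1`.) -/
theorem stmt_9 (N : ℕ) (hN : 0 < N) (α : Fin N → ℝ) (hα : ∀ k, α k ≠ 0)
    (hα1 : α ⟨0, hN⟩ = 1) (δ : Fin N → ℝ) (hδ : ∀ k, 0 < δ k)
    (c d : ℝ) (hc : 0 < c) (hd : 0 < d)
    (hrel : ∀ j : ℕ, ∀ h : j + 1 < N,
      (α ⟨j + 1, h⟩) ^ 2 / (α ⟨j, Nat.lt_of_succ_lt h⟩) ^ 2 =
        d * (j + 1) * ((N : ℝ) - (j + 1)) * δ ⟨j + 1, h⟩ /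
          (2 * (d * (j + 1) + c) * δ ⟨j, Nat.lt_of_succ_lt h⟩)) :
    mInt (fun x => Wmat α δ x) =
      Matrix.diagonal (fun m : Fin N =>
        (α m : ℂ) ^ 2 * (δ ⟨0, hN⟩ : ℂ) * 2 ^ (m : ℕ) * (Real.sqrt Real.pi : ℂ) *
          risingFactorial (-(N : ℂ) - ((c / d : ℝ) : ℂ)) (m : ℕ) /
          (((m : ℕ).factorial : ℂ) * risingFactorial (1 - (N : ℂ)) (m : ℕ))) ∧
      IsUnit (mInt (fun x => Wmat α δ x)) := by
  set a : ℂ := 1 + ((c / d : ℝ) : ℂ)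
  set b : ℂ := 1 - (N : ℂ)
  have hmN (m : Fin N) : ((m : ℕ) : ℝ) < N := Nat.cast_lt.2 m.isLt
  have hb (m : Fin N) : risingFactorial b m ≠ 0 :=
    risingFactorial_ne_zero_of_re_add_lt_one (by simp [b]; linarith [hmN m])
  have hab (m : Fin N) : risingFactorial (b - a) m ≠ 0 :=
    risingFactorial_ne_zero_of_re_add_lt_one (by simp [a, b]; linarith [hmN m, div_pos hc hd])
  have hβ (k : Fin N) : (δ k : ℂ) / (α k : ℂ) ^ 2 = δ ⟨0, hN⟩ *
      ((-2) ^ (k : ℕ) * risingFactorial a k / ((k : ℕ).factorial * risingFactorial b k)) := by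
    refine (eq_mul_prod_range_of_succ_eq_mul (β := fun k => (δ k : ℂ) / (α k : ℂ) ^ 2)
      (r := fun j => -2 * (a + j) / ((j + 1) * (b + j))) (fun j hj => ?_) k).trans ?_
    · have := div_sq_succ_eq_of_sq_div_sq_eq (hα _) (hα _) (hδ _).ne' hc hd hj (hrel j hj)
      simp only [a, b]
      exact_mod_cast this
    · rw [prod_range_neg_two_mul_div_eq_risingFactorial, hα1]
      simp
  have hW := mInt_Wmat_eq_diagonal_of_div_sq_eq δ hα hb hβ
  rw [show -(N : ℂ) - ((c / d : ℝ) : ℂ) = b - a by ring]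
  exact ⟨hW, hW ▸ isUnit_diagonal_moment hα (Complex.ofReal_ne_zero.2 (hδ _).ne') hab hb⟩
end

section
/- For all Mat_N(ℂ)-valued polynomials P and Q one has the adjoint relation ∫_ℝ P'(x) W^{(α,ν+1)}(x) (Q(x))^* dx = − ∫_ℝ P(x) W^{(α,ν)}(x) ( Q'(x) (Φ^{(α,ν)}(x))^* + Q(x) (Ψ^{(α,ν)}(x))^* )^* dx. -/
open Polynomial Matrix MeasureTheory

/-! Since `W^{(α,ν)}(x)` is invertible, `W^{(α,ν)} (Q' (Φ^{(α,ν)})^* + Q (Ψ^{(α,ν)})^*)^*` equals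
`W^{(α,ν+1)} Q'^* + (W^{(α,ν+1)})' Q^*`, so the identity is integration by parts for
`P W^{(α,ν+1)} Q^*`. Every entry of this product is a polynomial times `e^{-x²}`; this class is
stable under differentiation and consists of integrable functions, so the integral over `ℝ` of the
derivative vanishes. -/

def IsPolyGaussian (f : ℝ → ℂ) : Prop :=
  ∃ p : ℂ[X], ∀ x : ℝ, f x = p.eval (x : ℂ) * Real.exp (-x ^ 2)

theorem integrable_eval_mul_exp_neg_sq (p : ℂ[X]) :
    Integrable fun x : ℝ => p.eval (x : ℂ) * Real.exp (-x ^ 2) := by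
  simp_rw [eval_eq_sum_range, Finset.sum_mul]
  refine integrable_finsetSum _ fun k _ => ?_
  have hk : Integrable fun x : ℝ => x ^ k * Real.exp (-x ^ 2) := by
    simpa [Real.rpow_natCast] using
      integrable_rpow_mul_exp_neg_mul_sq one_pos (s := k) (by linarith [k.cast_nonneg (α := ℝ)])
  simpa [mul_assoc] using hk.ofReal.const_mul (p.coeff k)

theorem hasDerivAt_eval_mul_exp_neg_sq (p : ℂ[X]) (x : ℝ) :
    HasDerivAt (fun y : ℝ => p.eval (y : ℂ) * Real.exp (-y ^ 2))
      ((derivative p - C 2 * X * p).eval (x : ℂ) * Real.exp (-x ^ 2)) x := by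
  have hp : HasDerivAt (fun y : ℝ => p.eval (y : ℂ)) ((derivative p).eval (x : ℂ)) x :=
    (p.hasDerivAt (x : ℂ)).comp_ofReal
  have hexp : HasDerivAt (fun y : ℝ => (Real.exp (-y ^ 2) : ℂ))
      ((-2 * x * Real.exp (-x ^ 2) : ℝ)) x := by
    simpa [mul_comm] using (((hasDerivAt_pow 2 x).neg).exp).ofReal_comp
  refine (hp.fun_mul hexp).congr_deriv ?_
  simp only [eval_sub, eval_mul, eval_C, eval_X]
  push_cast
  ring

namespace IsPolyGaussian

variable {f : ℝ → ℂ}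

theorem integrable (hf : IsPolyGaussian f) : Integrable f := by
  obtain ⟨p, hp⟩ := hf
  simpa only [← funext hp] using integrable_eval_mul_exp_neg_sq p

theorem hasDerivAt (hf : IsPolyGaussian f) (x : ℝ) : HasDerivAt f (deriv f x) x := by
  obtain ⟨p, hp⟩ := hf
  rw [funext hp]
  exact (hasDerivAt_eval_mul_exp_neg_sq p x).differentiableAt.hasDerivAt

theorem deriv (hf : IsPolyGaussian f) : IsPolyGaussian (deriv f) := by
  obtain ⟨p, hp⟩ := hf
  exact ⟨derivative p - C 2 * X * p, fun x => by
    rw [funext hp, (hasDerivAt_eval_mul_exp_neg_sq p x).deriv]⟩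

theorem eval_mul (hf : IsPolyGaussian f) (q : ℂ[X]) :
    IsPolyGaussian fun x => q.eval (x : ℂ) * f x := by
  obtain ⟨p, hp⟩ := hf
  exact ⟨q * p, fun x => by simp only [hp, Polynomial.eval_mul, mul_assoc]⟩

theorem sum {ι : Type*} [Fintype ι] {f : ι → ℝ → ℂ} (hf : ∀ i, IsPolyGaussian (f i)) :
    IsPolyGaussian fun x => ∑ i, f i x := by
  choose p hp using hf
  exact ⟨∑ i, p i, fun x => by simp only [hp, eval_finsetSum, Finset.sum_mul]⟩

end IsPolyGaussian

section EvalM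

variable {N : ℕ}

theorem evalM_eq_map (P : (Matrix (Fin N) (Fin N) ℂ)[X]) (x : ℝ) :
    evalM P x = (matPolyEquiv.symm P).map (eval (x : ℂ)) := by
  rw [matPolyEquiv_symm_map_eval, evalM, smul_one_eq_diagonal]
  rfl

theorem evalM_apply (P : (Matrix (Fin N) (Fin N) ℂ)[X]) (x : ℝ) (i j : Fin N) :
    evalM P x i j = (matPolyEquiv.symm P i j).eval (x : ℂ) := by
  rw [evalM_eq_map, map_apply]

theorem matPolyEquiv_symm_derivative (P : (Matrix (Fin N) (Fin N) ℂ)[X]) (i j : Fin N) :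
    matPolyEquiv.symm (derivative P) i j = derivative (matPolyEquiv.symm P i j) := by
  ext k
  rw [coeff_derivative, matPolyEquiv_symm_apply_coeff, matPolyEquiv_symm_apply_coeff,
    coeff_derivative, ← Nat.cast_succ, ← nsmul_eq_mul', Matrix.smul_apply, nsmul_eq_mul',
    Nat.cast_succ]

theorem hasDerivAt_evalM_apply (P : (Matrix (Fin N) (Fin N) ℂ)[X]) (x : ℝ) (i j : Fin N) :
    HasDerivAt (fun y => evalM P y i j) (evalM (derivative P) x i j) x := by
  simp only [evalM_apply, matPolyEquiv_symm_derivative]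
  exact ((matPolyEquiv.symm P i j).hasDerivAt (x : ℂ)).comp_ofReal

end EvalM

section EntrywiseDeriv

variable {𝕜 : Type*} [NontriviallyNormedField 𝕜] {l m n : Type*} {x : 𝕜}

theorem hasDerivAt_matrix_mul_apply {𝔸 : Type*} [NormedRing 𝔸] [NormedAlgebra 𝕜 𝔸] [Fintype m]
    {f : 𝕜 → Matrix l m 𝔸} {g : 𝕜 → Matrix m n 𝔸} {f' : Matrix l m 𝔸} {g' : Matrix m n 𝔸}
    (hf : ∀ i j, HasDerivAt (fun y => f y i j) (f' i j) x)
    (hg : ∀ i j, HasDerivAt (fun y => g y i j) (g' i j) x) (i : l) (j : n) :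
    HasDerivAt (fun y => (f y * g y) i j) ((f' * g x + f x * g') i j) x := by
  simp only [mul_apply, Matrix.add_apply, ← Finset.sum_add_distrib]
  exact HasDerivAt.fun_sum fun k _ => (hf i k).fun_mul (hg k j)

theorem hasDerivAt_conjTranspose_apply [StarRing 𝕜] [TrivialStar 𝕜] {F : Type*}
    [NormedAddCommGroup F] [NormedSpace 𝕜 F] [StarAddMonoid F] [StarModule 𝕜 F]
    [ContinuousStar F] {f : 𝕜 → Matrix m n F} {f' : Matrix m n F}
    (hf : ∀ i j, HasDerivAt (fun y => f y i j) (f' i j) x) (i : n) (j : m) :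
    HasDerivAt (fun y => (f y)ᴴ i j) (f'ᴴ i j) x :=
  (hf j i).star

end EntrywiseDeriv

theorem star_eval_ofReal (p : ℂ[X]) (x : ℝ) :
    star (p.eval (x : ℂ)) = (p.map (starRingEnd ℂ)).eval (x : ℂ) := by
  rw [eval_map, ← Complex.conj_ofReal x, eval₂_hom, Complex.conj_ofReal]
  rfl

section PolyGaussianEntries

variable {N : ℕ} {M : ℝ → Matrix (Fin N) (Fin N) ℂ}

theorem isPolyGaussian_evalM_mul_apply (hM : ∀ a b, IsPolyGaussian fun x => M x a b)
    (P : (Matrix (Fin N) (Fin N) ℂ)[X]) (i j : Fin N) :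
    IsPolyGaussian fun x => (evalM P x * M x) i j := by
  simp only [mul_apply, evalM_apply]
  exact .sum fun k => (hM k j).eval_mul _

theorem isPolyGaussian_mul_conjTranspose_evalM_apply
    (hM : ∀ a b, IsPolyGaussian fun x => M x a b) (Q : (Matrix (Fin N) (Fin N) ℂ)[X])
    (i j : Fin N) : IsPolyGaussian fun x => (M x * (evalM Q x)ᴴ) i j := by
  simp only [mul_apply, conjTranspose_apply, evalM_apply, star_eval_ofReal, mul_comm (M _ i _)]
  exact .sum fun k => (hM i k).eval_mul _

theorem isPolyGaussian_evalM_mul_mul_conjTranspose_apply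
    (hM : ∀ a b, IsPolyGaussian fun x => M x a b) (P Q : (Matrix (Fin N) (Fin N) ℂ)[X])
    (i j : Fin N) : IsPolyGaussian fun x => (evalM P x * M x * (evalM Q x)ᴴ) i j :=
  isPolyGaussian_mul_conjTranspose_evalM_apply (isPolyGaussian_evalM_mul_apply hM P) Q i j

theorem mInt_evalM_derivative_mul_mul_conjTranspose
    (hM : ∀ a b, IsPolyGaussian fun x => M x a b) (P Q : (Matrix (Fin N) (Fin N) ℂ)[X]) :
    mInt (fun x => evalM (derivative P) x * M x * (evalM Q x)ᴴ) =
      -mInt (fun x => evalM P x * M x * (evalM (derivative Q) x)ᴴ +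
        evalM P x * Matrix.of (fun a b => deriv (fun y => M y a b) x) * (evalM Q x)ᴴ) := by
  have hM' : ∀ a b,
      IsPolyGaussian fun x => Matrix.of (fun a b => deriv (fun y => M y a b) x) a b :=
    fun a b => (hM a b).deriv
  ext i j
  have hderiv : ∀ x, HasDerivAt (fun y => (evalM P y * M y * (evalM Q y)ᴴ) i j)
      (((evalM (derivative P) x * M x +
          evalM P x * Matrix.of (fun a b => deriv (fun y => M y a b) x)) * (evalM Q x)ᴴ +
        evalM P x * M x * (evalM (derivative Q) x)ᴴ) i j) x := fun x =>
    hasDerivAt_matrix_mul_apply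
      (hasDerivAt_matrix_mul_apply (hasDerivAt_evalM_apply P x) fun a b => (hM a b).hasDerivAt x)
      (hasDerivAt_conjTranspose_apply (hasDerivAt_evalM_apply Q x)) i j
  have h₁ := (isPolyGaussian_evalM_mul_mul_conjTranspose_apply hM (derivative P) Q i j).integrable
  have h₂ := (isPolyGaussian_evalM_mul_mul_conjTranspose_apply hM' P Q i j).integrable
  have h₃ := (isPolyGaussian_evalM_mul_mul_conjTranspose_apply hM P (derivative Q) i j).integrable
  have hzero := integral_eq_zero_of_hasDerivAt_of_integrable hderiv
    (by simpa only [add_mul, Matrix.add_apply] using (h₁.fun_add h₂).fun_add h₃)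
    (isPolyGaussian_evalM_mul_mul_conjTranspose_apply hM P Q i j).integrable
  simp only [add_mul, Matrix.add_apply] at hzero
  simp only [mInt, of_apply, Matrix.neg_apply, Matrix.add_apply]
  linear_combination hzero - integral_add (h₁.fun_add h₂) h₃ - integral_add h₁ h₂ +
    integral_add h₃ h₂

end PolyGaussianEntries

section Weight

variable {N : ℕ}

noncomputable def LmatPoly (N : ℕ) : Matrix (Fin N) (Fin N) ℂ[X] :=
  of fun m n =>
    if (n : ℕ) ≤ m then C ((Nat.factorial (m - n) : ℂ))⁻¹ * physHermite (m - n) else 0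

theorem lmatPoly_map_eval (z : ℂ) : (LmatPoly N).map (eval z) = Lmat N z := by
  ext m n
  simp only [LmatPoly, Lmat, map_apply, of_apply]
  split_ifs
  · rw [eval_mul, eval_C, div_eq_inv_mul]
  · exact eval_zero

theorem lmatAlpha_eq_evalM (α : Fin N → ℝ) (x : ℝ) :
    LmatAlpha α x =
      evalM (matPolyEquiv ((Smat α).map C * LmatPoly N * (Smat α)⁻¹.map C)) x := by
  rw [evalM_eq_map, AlgEquiv.symm_apply_apply, ← coe_evalRingHom, Matrix.map_mul, Matrix.map_mul,
    Matrix.map_map, Matrix.map_map, coe_evalRingHom, lmatPoly_map_eval,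
    show eval (x : ℂ) ∘ C = id from funext fun _ => eval_C, Matrix.map_id, Matrix.map_id,
    LmatAlpha]

theorem isPolyGaussian_wmat_apply (α δ : Fin N → ℝ) (a b : Fin N) :
    IsPolyGaussian fun x => Wmat α δ x a b := by
  have hD : ∀ k l, IsPolyGaussian fun x =>
      ((Real.exp (-x ^ 2) : ℂ) • diagonal fun k => (δ k : ℂ)) k l :=
    fun k l => ⟨C (diagonal (fun k => (δ k : ℂ)) k l), fun x => by simp [mul_comm]⟩
  have hW : ∀ x, Wmat α δ x =
      LmatAlpha α x * ((Real.exp (-x ^ 2) : ℂ) • diagonal fun k => (δ k : ℂ)) *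
        (LmatAlpha α x)ᴴ := fun x => by
    rw [Wmat, Matrix.mul_smul, Matrix.smul_mul]
  simp only [hW, lmatAlpha_eq_evalM]
  exact isPolyGaussian_evalM_mul_mul_conjTranspose_apply hD _ _ a b

theorem det_lmat (z : ℂ) : (Lmat N z).det = 1 := by
  have hL : (Lmat N z).BlockTriangular OrderDual.toDual := fun i j hij => by
    simp only [Lmat, of_apply, if_neg (not_le.mpr (show (i : ℕ) < j from hij))]
  rw [det_of_isLowerTriangular _ hL]
  exact Finset.prod_eq_one fun i _ => by simp [Lmat, physHermite]

theorem det_lmatAlpha {α : Fin N → ℝ} (hα : ∀ k, α k ≠ 0) (x : ℝ) :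
    (LmatAlpha α x).det = 1 := by
  have hS : IsUnit (Smat α) :=
    isUnit_diagonal.mpr (Pi.isUnit_iff.mpr fun k => by simpa using hα k)
  rw [LmatAlpha, det_conj hS, det_lmat]

theorem isUnit_det_wmat {α : Fin N → ℝ} (hα : ∀ k, α k ≠ 0) {δ : Fin N → ℝ}
    (hδ : ∀ k, δ k ≠ 0) (x : ℝ) : IsUnit (Wmat α δ x).det := by
  rw [Wmat, det_smul, det_mul, det_mul, det_conjTranspose, det_lmatAlpha hα, det_diagonal]
  simpa [Finset.prod_ne_zero_iff, Real.exp_ne_zero] using hδ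

end Weight

theorem stmt_10_general (N : ℕ) (α : Fin N → ℝ) (hα : ∀ k, α k ≠ 0)
    (δ : Fin N → ℝ) (hδ : ∀ k, 0 < δ k)
    (δ' : Fin N → ℝ)
    (Φ Ψ : ℝ → Matrix (Fin N) (Fin N) ℂ)
    (hΦ : ∀ x : ℝ, Φ x = (Wmat α δ x)⁻¹ * Wmat α δ' x)
    (hΨ : ∀ x : ℝ, Ψ x = (Wmat α δ x)⁻¹ *
      Matrix.of (fun i j => deriv (fun y : ℝ => Wmat α δ' y i j) x)) :
    ∀ P Q : Polynomial (Matrix (Fin N) (Fin N) ℂ),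
      mInt (fun x => evalM (Polynomial.derivative P) x * Wmat α δ' x * (evalM Q x)ᴴ) =
        -mInt (fun x => evalM P x * Wmat α δ x *
          (evalM (Polynomial.derivative Q) x * (Φ x)ᴴ + evalM Q x * (Ψ x)ᴴ)ᴴ) := by
  intro P Q
  have hW : ∀ x, IsUnit (Wmat α δ x).det := isUnit_det_wmat hα fun k => (hδ k).ne'
  have hrhs : ∀ x, evalM P x * Wmat α δ x *
      (evalM (derivative Q) x * (Φ x)ᴴ + evalM Q x * (Ψ x)ᴴ)ᴴ =
        evalM P x * Wmat α δ' x * (evalM (derivative Q) x)ᴴ +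
          evalM P x * Matrix.of (fun i j => deriv (fun y => Wmat α δ' y i j) x) *
            (evalM Q x)ᴴ := fun x => by
    simp only [hΦ, hΨ, conjTranspose_add, conjTranspose_mul, conjTranspose_conjTranspose,
      Matrix.mul_add, Matrix.mul_assoc, mul_nonsing_inv_cancel_left _ _ (hW x)]
  simp only [hrhs]
  exact mInt_evalM_derivative_mul_mul_conjTranspose (isPolyGaussian_wmat_apply α δ') P Q

/-- Proposition 3.10(i): the shift operator
`(Q S^{(α,ν)})(x) = Q'(x)(Φ^{(α,ν)}(x))^* + Q(x)(Ψ^{(α,ν)}(x))^*` satisfies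
`⟨P', Q⟩^{(ν+1)} = -⟨P, Q S^{(α,ν)}⟩^{(ν)}` for all matrix-valued polynomials `P, Q`,
where `Φ^{(α,ν)}(x) = (W^{(α,ν)}(x))⁻¹ W^{(α,ν+1)}(x)` and
`Ψ^{(α,ν)}(x) = (W^{(α,ν)}(x))⁻¹ (dW^{(α,ν+1)}/dx)(x)`. -/
theorem stmt_10 (N : ℕ) (hN : 0 < N) (α : Fin N → ℝ) (hα : ∀ k, α k ≠ 0)
    (hα1 : α ⟨0, hN⟩ = 1) (δ : Fin N → ℝ) (hδ : ∀ k, 0 < δ k)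
    (c d : ℝ) (hc : 0 < c) (hd : 0 < d)
    (hrel : ∀ j : ℕ, ∀ h : j + 1 < N,
      (α ⟨j + 1, h⟩) ^ 2 / (α ⟨j, Nat.lt_of_succ_lt h⟩) ^ 2 =
        d * (j + 1) * ((N : ℝ) - (j + 1)) * δ ⟨j + 1, h⟩ /
          (2 * (d * (j + 1) + c) * δ ⟨j, Nat.lt_of_succ_lt h⟩))
    (δ' : Fin N → ℝ) (hδ' : ∀ i : Fin N, δ' i = (d * ((i : ℕ) + 1) + c) * δ i)
    (Φ Ψ : ℝ → Matrix (Fin N) (Fin N) ℂ)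
    (hΦ : ∀ x : ℝ, Φ x = (Wmat α δ x)⁻¹ * Wmat α δ' x)
    (hΨ : ∀ x : ℝ, Ψ x = (Wmat α δ x)⁻¹ *
      Matrix.of (fun i j => deriv (fun y : ℝ => Wmat α δ' y i j) x)) :
    ∀ P Q : Polynomial (Matrix (Fin N) (Fin N) ℂ),
      mInt (fun x => evalM (Polynomial.derivative P) x * Wmat α δ' x * (evalM Q x)ᴴ) =
        -mInt (fun x => evalM P x * Wmat α δ x *
          (evalM (Polynomial.derivative Q) x * (Φ x)ᴴ + evalM Q x * (Ψ x)ᴴ)ᴴ) :=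
  stmt_10_general N α hα δ hδ δ' Φ Ψ hΦ hΨ
end

section
/- The weight W^{(α,ν)} is irreducible: if T ∈ Mat_N(ℂ) satisfies T W^{(α,ν)}(x) = W^{(α,ν)}(x) T^* for all x ∈ ℝ, then T = c I for some real number c. -/
open Polynomial Matrix MeasureTheory

/-!
After cancelling `e^{-x²}`, the entries of `L^α(x) Δ L^α(x)^*` are polynomials `Q m k` in `x`
of exact degree `m + k`: only the `j = 1` term of `∑ⱼ δⱼ L^α_{mj} L^α_{kj}` reaches that degree.
So `T Q = Q T^*` is an identity of polynomial matrices, which can be read coefficientwise.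
In the entry `(N, 1)` the left side has degree `< N` while the right side is
`∑ₗ Q_{Nl} conj T_{1l}` with `deg Q_{Nl} = N - 1 + l`; hence `T_{1l} = 0` for `l ≠ 1`.
The entry `(m, 1)` then reads `∑ₗ T_{ml} Q_{l1} = conj T_{11} Q_{m1}`, and since the `Q_{l1}`
have distinct exact degrees, `T = conj T_{11} · I`, which also forces `T_{11}` to be real.
-/
namespace Polynomial

lemma weight_eq_zero_of_sum_mul_coeff_eq_zero {ι R : Type*} [Fintype ι] [Semiring R]
    [NoZeroDivisors R] (p : ι → R[X]) (deg : ι → ℕ) (hinj : Function.Injective deg)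
    (hdeg : ∀ i, (p i).natDegree ≤ deg i) (hlead : ∀ i, (p i).coeff (deg i) ≠ 0)
    (a : ι → R) {D : ℕ} (h : ∀ n, D ≤ n → ∑ i, a i * (p i).coeff n = 0) :
    ∀ i, D ≤ deg i → a i = 0 := by
  classical
  by_contra! hne
  obtain ⟨i, hi, hmax⟩ := (Finset.univ.filter fun i => D ≤ deg i ∧ a i ≠ 0).exists_max_image
    deg (by simpa [Finset.Nonempty] using hne)
  simp only [Finset.mem_filter, Finset.mem_univ, true_and] at hi hmax
  have hsingle : ∑ j, a j * (p j).coeff (deg i) = a i * (p i).coeff (deg i) := by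
    refine Finset.sum_eq_single i (fun j _ hji => ?_) (by simp)
    by_cases haj : a j = 0
    · rw [haj, zero_mul]
    have hlt : deg j < deg i :=
      lt_of_le_of_ne (not_lt.mp fun hij => (hmax j ⟨hi.1.trans hij.le, haj⟩).not_gt hij)
        (hinj.ne hji)
    rw [coeff_eq_zero_of_natDegree_lt ((hdeg j).trans_lt hlt), mul_zero]
  exact mul_ne_zero hi.2 (hlead i) (hsingle ▸ h _ hi.1)

end Polynomial

namespace Matrix

variable {R : Type*} [CommRing R] {N : ℕ}

lemma sum_mul_coeff_eq_of_map_C_mul_eq {Q : Matrix (Fin N) (Fin N) R[X]}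
    {T S : Matrix (Fin N) (Fin N) R} (h : T.map C * Q = Q * S.map C) (m k : Fin N) (n : ℕ) :
    ∑ l, T m l * (Q l k).coeff n = ∑ l, S l k * (Q m l).coeff n := by
  simpa [mul_apply, finsetSum_coeff, coeff_C_mul, coeff_mul_C, mul_comm]
    using congrArg (fun M => (M m k).coeff n) h

theorem eq_smul_one_of_map_C_mul_eq [NoZeroDivisors R] [NeZero N]
    (Q : Matrix (Fin N) (Fin N) R[X])
    (hdeg : ∀ m k, (Q m k).natDegree ≤ m + k) (hlead : ∀ m k, (Q m k).coeff (m + k) ≠ 0)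
    {T S : Matrix (Fin N) (Fin N) R} (h : T.map C * Q = Q * S.map C) :
    T = S 0 0 • 1 := by
  have hN : N ≠ 0 := NeZero.ne N
  have key := sum_mul_coeff_eq_of_map_C_mul_eq h
  have hS : ∀ l, l ≠ 0 → S l 0 = 0 := by
    let last : Fin N := ⟨N - 1, by omega⟩
    have hhigh : ∀ n, N ≤ n → ∑ l, S l 0 * (Q last l).coeff n = 0 := fun n hn => by
      rw [← key]
      refine Finset.sum_eq_zero fun l _ => ?_
      have hlt : (l : ℕ) + (0 : Fin N) < n := by rw [Fin.val_zero]; omega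
      rw [coeff_eq_zero_of_natDegree_lt ((hdeg l 0).trans_lt hlt), mul_zero]
    intro l hl
    have := Fin.pos_iff_ne_zero.mpr hl
    exact weight_eq_zero_of_sum_mul_coeff_eq_zero (Q last) (fun l => N - 1 + l)
      (fun i j hij => Fin.ext (by simpa using hij)) (hdeg last) (hlead last) (fun l => S l 0)
      hhigh l (by omega)
  ext m l
  refine sub_eq_zero.mp (weight_eq_zero_of_sum_mul_coeff_eq_zero (fun l => Q l 0) (fun l => l)
    Fin.val_injective (fun l => by simpa using hdeg l 0) (fun l => by simpa using hlead l 0)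
    (fun l => T m l - (S 0 0 • 1 : Matrix (Fin N) (Fin N) R) m l) (D := 0) (fun n _ => ?_) l
    (Nat.zero_le _))
  have hcol : ∑ l, S l 0 * (Q m l).coeff n = S 0 0 * (Q m 0).coeff n :=
    Finset.sum_eq_single 0 (fun l _ hl => by rw [hS l hl, zero_mul]) (by simp)
  simp [sub_mul, Finset.sum_sub_distrib, key, hcol, one_apply]

lemma eq_of_forall_map_eval_ofReal_eq {m n : Type*} {A B : Matrix m n ℂ[X]}
    (h : ∀ x : ℝ, A.map (eval (x : ℂ)) = B.map (eval (x : ℂ))) : A = B := by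
  ext i j : 1
  refine eq_of_infinite_eval_eq _ _
    ((Set.infinite_range_of_injective Complex.ofReal_injective).mono ?_)
  rintro _ ⟨x, rfl⟩
  exact congrFun (congrFun (h x) i) j

end Matrix

lemma natDegree_physHermite_le (n : ℕ) : (physHermite n).natDegree ≤ n := by
  induction n with
  | zero => simp [physHermite]
  | succ n ih =>
    rw [physHermite]
    have hmul : (C (2 : ℂ) * X * physHermite n).natDegree ≤ n + 1 := by
      have := natDegree_mul_le_of_le ((natDegree_C_mul_le (2 : ℂ) X).trans natDegree_X_le) ih
      omega
    have hder := natDegree_derivative_le (physHermite n)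
    exact (natDegree_sub_le _ _).trans (max_le hmul (by omega))

lemma coeff_physHermite_self (n : ℕ) : (physHermite n).coeff n = 2 ^ n := by
  induction n with
  | zero => simp [physHermite]
  | succ n ih =>
    have hder : (derivative (physHermite n)).coeff (n + 1) = 0 := by
      have := natDegree_physHermite_le n
      exact coeff_eq_zero_of_natDegree_lt ((natDegree_derivative_le _).trans_lt (by omega))
    rw [physHermite, coeff_sub, hder, mul_assoc, coeff_C_mul, coeff_X_mul, ih, pow_succ]
    ring

lemma map_conj_physHermite (n : ℕ) : (physHermite n).map (starRingEnd ℂ) = physHermite n := by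
  induction n with
  | zero => simp [physHermite]
  | succ n ih =>
    rw [physHermite, Polynomial.map_sub, Polynomial.map_mul, Polynomial.map_mul, map_C, map_X,
      ← derivative_map, ih, map_ofNat]

lemma starRingEnd_eval_ofReal {p : ℂ[X]} (hp : p.map (starRingEnd ℂ) = p) (x : ℝ) :
    starRingEnd ℂ (p.eval (x : ℂ)) = p.eval (x : ℂ) := by
  rw [← eval₂_at_apply, Complex.conj_ofReal, ← eval_map, hp]

section WeightPoly

variable {N : ℕ} (α : Fin N → ℝ)

noncomputable def lmatAlphaPoly : Matrix (Fin N) (Fin N) ℂ[X] :=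
  of fun m j => if (j : ℕ) ≤ m then
    C ((α m / α j / ((m - j : ℕ).factorial : ℝ) : ℝ) : ℂ) * physHermite (m - j) else 0

noncomputable def weightPoly (δ : Fin N → ℝ) : Matrix (Fin N) (Fin N) ℂ[X] :=
  lmatAlphaPoly α * diagonal (fun k => C (δ k : ℂ)) * (lmatAlphaPoly α)ᵀ

lemma inv_Smat {α : Fin N → ℝ} (hα : ∀ k, α k ≠ 0) :
    (Smat α)⁻¹ = diagonal fun k => (α k : ℂ)⁻¹ := by
  refine inv_eq_right_inv ?_
  rw [Smat, diagonal_mul_diagonal, ← diagonal_one]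
  exact congrArg diagonal (funext fun k => mul_inv_cancel₀ (by exact_mod_cast hα k))

lemma map_eval_lmatAlphaPoly {α : Fin N → ℝ} (hα : ∀ k, α k ≠ 0) (x : ℝ) :
    (lmatAlphaPoly α).map (eval (x : ℂ)) = LmatAlpha α x := by
  ext m j
  rw [LmatAlpha, inv_Smat hα, mul_diagonal, Smat, diagonal_mul, Lmat]
  simp only [map_apply, lmatAlphaPoly, of_apply]
  split_ifs
  · simp only [eval_mul, eval_C]
    push_cast
    ring
  · simp

lemma map_map_conj_lmatAlphaPoly :
    (lmatAlphaPoly α).map (Polynomial.map (starRingEnd ℂ)) = lmatAlphaPoly α := by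
  ext m j : 1
  simp only [map_apply, lmatAlphaPoly, of_apply]
  split_ifs
  · rw [Polynomial.map_mul, map_C, Complex.conj_ofReal, map_conj_physHermite]
  · simp

lemma conjTranspose_LmatAlpha {α : Fin N → ℝ} (hα : ∀ k, α k ≠ 0) (x : ℝ) :
    (LmatAlpha α x)ᴴ = (LmatAlpha α x)ᵀ := by
  ext m j
  rw [conjTranspose_apply, transpose_apply, ← map_eval_lmatAlphaPoly hα, map_apply]
  exact starRingEnd_eval_ofReal (congrFun (congrFun (map_map_conj_lmatAlphaPoly α) j) m) x

lemma Wmat_eq_smul_map_eval_weightPoly {α : Fin N → ℝ} (hα : ∀ k, α k ≠ 0)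
    (δ : Fin N → ℝ) (x : ℝ) :
    Wmat α δ x = (Real.exp (-x ^ 2) : ℂ) • (weightPoly α δ).map (eval (x : ℂ)) := by
  rw [Wmat, weightPoly, ← coe_evalRingHom, Matrix.map_mul, Matrix.map_mul, transpose_map,
    diagonal_map (map_zero _), coe_evalRingHom, map_eval_lmatAlphaPoly hα,
    conjTranspose_LmatAlpha hα]
  simp

lemma natDegree_lmatAlphaPoly_le (m j : Fin N) :
    (lmatAlphaPoly α m j).natDegree ≤ m - j := by
  simp only [lmatAlphaPoly, of_apply]
  split_ifs
  · exact (natDegree_C_mul_le _ _).trans (natDegree_physHermite_le _)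
  · simp

lemma coeff_lmatAlphaPoly_eq_zero [NeZero N] {j : Fin N} (hj : j ≠ 0) (m : Fin N) :
    (lmatAlphaPoly α m j).coeff m = 0 := by
  by_cases hjm : (j : ℕ) ≤ m
  · refine coeff_eq_zero_of_natDegree_lt ((natDegree_lmatAlphaPoly_le α m j).trans_lt ?_)
    have := Fin.pos_iff_ne_zero.mpr hj
    omega
  · have hjm' : ¬j ≤ m := hjm
    simp [lmatAlphaPoly, hjm']

lemma coeff_lmatAlphaPoly_zero_ne_zero [NeZero N] {α : Fin N → ℝ} (hα : ∀ k, α k ≠ 0)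
    (m : Fin N) : (lmatAlphaPoly α m 0).coeff m ≠ 0 := by
  simp [lmatAlphaPoly, coeff_physHermite_self, hα, Nat.factorial_ne_zero]

lemma weightPoly_apply (δ : Fin N → ℝ) (m k : Fin N) :
    weightPoly α δ m k = ∑ j, lmatAlphaPoly α m j * lmatAlphaPoly α k j * C (δ j : ℂ) := by
  rw [weightPoly, mul_apply]
  simp only [mul_diagonal, transpose_apply]
  exact Finset.sum_congr rfl fun j _ => mul_right_comm _ _ _

lemma natDegree_weightPoly_le (δ : Fin N → ℝ) (m k : Fin N) :
    (weightPoly α δ m k).natDegree ≤ m + k := by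
  rw [weightPoly_apply]
  refine natDegree_sum_le_of_forall_le _ _ fun j _ => (natDegree_mul_C_le _ _).trans ?_
  exact natDegree_mul_le_of_le ((natDegree_lmatAlphaPoly_le α m j).trans (Nat.sub_le _ _))
    ((natDegree_lmatAlphaPoly_le α k j).trans (Nat.sub_le _ _))

lemma coeff_weightPoly_ne_zero [NeZero N] {α : Fin N → ℝ} (hα : ∀ k, α k ≠ 0)
    {δ : Fin N → ℝ} (hδ : δ 0 ≠ 0) (m k : Fin N) :
    (weightPoly α δ m k).coeff (m + k) ≠ 0 := by
  have hcoeff : ∀ j, (lmatAlphaPoly α m j * lmatAlphaPoly α k j * C (δ j : ℂ)).coeff (m + k) =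
      (lmatAlphaPoly α m j).coeff m * (lmatAlphaPoly α k j).coeff k * δ j := fun j => by
    rw [coeff_mul_C, coeff_mul_add_eq_of_natDegree_le
      ((natDegree_lmatAlphaPoly_le α m j).trans (Nat.sub_le _ _))
      ((natDegree_lmatAlphaPoly_le α k j).trans (Nat.sub_le _ _))]
  rw [weightPoly_apply, finsetSum_coeff, Finset.sum_congr rfl fun j _ => hcoeff j,
    Finset.sum_eq_single 0 (fun j _ hj => by simp [coeff_lmatAlphaPoly_eq_zero α hj]) (by simp)]
  exact mul_ne_zero (mul_ne_zero (coeff_lmatAlphaPoly_zero_ne_zero hα m)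
    (coeff_lmatAlphaPoly_zero_ne_zero hα k)) (by exact_mod_cast hδ)

end WeightPoly

theorem stmt_17_general
    (N : ℕ) (hN : 0 < N) (α : Fin N → ℝ) (hα : ∀ k, α k ≠ 0)
    (δ : ℕ → Fin N → ℝ) (hδ : ∀ k i, 0 < δ k i)
    (T : Matrix (Fin N) (Fin N) ℂ)
    (hT : ∀ x : ℝ, T * Wmat α (δ 0) x = Wmat α (δ 0) x * Tᴴ) :
    ∃ r : ℝ, T = (r : ℂ) • (1 : Matrix (Fin N) (Fin N) ℂ) := by
  have : NeZero N := ⟨hN.ne'⟩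
  have hpoly : T.map C * weightPoly α (δ 0) = weightPoly α (δ 0) * Tᴴ.map C := by
    refine Matrix.eq_of_forall_map_eval_ofReal_eq fun x => ?_
    have hexp : (Real.exp (-x ^ 2) : ℂ) ≠ 0 := by exact_mod_cast (Real.exp_pos _).ne'
    have hx := hT x
    rw [Wmat_eq_smul_map_eval_weightPoly hα, Matrix.mul_smul, Matrix.smul_mul] at hx
    rw [← coe_evalRingHom, Matrix.map_mul, Matrix.map_mul, Matrix.map_map, Matrix.map_map]
    simpa [Function.comp_def] using smul_right_injective _ hexp hx
  have hscalar := Matrix.eq_smul_one_of_map_C_mul_eq _ (natDegree_weightPoly_le α (δ 0))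
    (coeff_weightPoly_ne_zero hα (hδ 0 0).ne') hpoly
  have hreal : star (T 0 0) = T 0 0 := by
    simpa using (congrFun (congrFun hscalar 0) 0).symm
  refine ⟨(T 0 0).re, hscalar.trans ?_⟩
  rw [conjTranspose_apply, Complex.conj_eq_iff_re.mp hreal, hreal]

/-- Proposition 3.15: irreducibility of the weight `W^{(α,ν)}`: any `T` with
`T W^{(α,ν)}(x) = W^{(α,ν)}(x) T^*` for all `x` is a real multiple of the identity. -/
theorem stmt_17
    (N : ℕ) (hN : 0 < N) (α : Fin N → ℝ) (hα : ∀ k, α k ≠ 0) (hα1 : α ⟨0, hN⟩ = 1)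
    (c d : ℕ → ℝ) (hc : ∀ k, 0 < c k) (hd : ∀ k, 0 < d k)
    (δ : ℕ → Fin N → ℝ) (hδ : ∀ k i, 0 < δ k i)
    (hΔ : ∀ (k : ℕ) (i : Fin N), δ (k + 1) i = (d k * ((i : ℕ) + 1) + c k) * δ k i)
    (hrel : ∀ (k : ℕ) (j : ℕ) (h : j + 1 < N),
      (α ⟨j + 1, h⟩) ^ 2 / (α ⟨j, Nat.lt_of_succ_lt h⟩) ^ 2 =
        d k * (j + 1) * ((N : ℝ) - (j + 1)) * δ k ⟨j + 1, h⟩ /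
          (2 * (d k * (j + 1) + c k) * δ k ⟨j, Nat.lt_of_succ_lt h⟩))
    (T : Matrix (Fin N) (Fin N) ℂ)
    (hT : ∀ x : ℝ, T * Wmat α (δ 0) x = Wmat α (δ 0) x * Tᴴ) :
    ∃ r : ℝ, T = (r : ℂ) • (1 : Matrix (Fin N) (Fin N) ℂ) :=
  stmt_17_general N hN α hα δ hδ T hT
end

section
/- Burchnall's formula: for every C^∞ function Q : (a,b) → Mat_N(ℂ) and every x ∈ (a,b), ( ((Q S_{n−1}) S_{n−2}) ⋯ S_0 )(x) = ∑_{k=0}^n C(n,k) Q^{(k)}(x) (G_{n−k,k})^{−1} P_{n−k,k}(x) ( Φ_0(x) Φ_1(x) ⋯ Φ_{k−1}(x) )^*, where Q^{(k)} is the k-th derivative, C(n,k) is the binomial coefficient, the operators S_{n−1}, …, S_0 are applied successively starting with S_{n−1}, and the product of Φ's is the identity matrix for k = 0. -/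
open Polynomial Matrix MeasureTheory

/-- The open interval `(a,b) ⊆ ℝ` with possibly infinite endpoints `a, b : EReal`. -/
def ointerval (a b : EReal) : Set ℝ := {x : ℝ | a < (x : ℝ) ∧ ((x : ℝ) : EReal) < b}

/-- Entrywise derivative of a matrix-valued function. -/
noncomputable def derivM {N : ℕ} (f : ℝ → Matrix (Fin N) (Fin N) ℂ) (x : ℝ) :
    Matrix (Fin N) (Fin N) ℂ :=
  Matrix.of fun i j => deriv (fun y => f y i j) x

/-- Iterated entrywise derivative of a matrix-valued function. -/
noncomputable def iterDerivM {N : ℕ} (k : ℕ) (f : ℝ → Matrix (Fin N) (Fin N) ℂ) (x : ℝ) :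
    Matrix (Fin N) (Fin N) ℂ :=
  Matrix.of fun i j => iteratedDeriv k (fun y => f y i j) x

/-- The shift operator `S_k` acting from the right:
`(Q S_k)(x) = [d/dx (Q(x) W_{k+1}(x))] (W_k(x))⁻¹`. -/
noncomputable def shiftOp {N : ℕ} (W : ℕ → ℝ → Matrix (Fin N) (Fin N) ℂ) (k : ℕ)
    (Q : ℝ → Matrix (Fin N) (Fin N) ℂ) : ℝ → Matrix (Fin N) (Fin N) ℂ :=
  fun x => derivM (fun y => Q y * W (k + 1) y) x * (W k x)⁻¹

/-- Successive application of the shift operators, starting with `S_{m-1}` and ending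
with `S_0`: `iterShift W m Q = ((Q S_{m-1}) S_{m-2}) ⋯ S_0`. -/
noncomputable def iterShift {N : ℕ} (W : ℕ → ℝ → Matrix (Fin N) (Fin N) ℂ) :
    ℕ → (ℝ → Matrix (Fin N) (Fin N) ℂ) → (ℝ → Matrix (Fin N) (Fin N) ℂ)
  | 0, Q => Q
  | m + 1, Q => iterShift W m (shiftOp W m Q)


lemma aux_isOpen_ointerval (a b : EReal) : IsOpen (ointerval a b) :=
  (isOpen_Ioo (a := a) (b := b)).preimage continuous_coe_real_ereal

lemma aux_prodPhi {N : ℕ} {s : Set ℝ} (n : ℕ) (W : ℕ → ℝ → Matrix (Fin N) (Fin N) ℂ)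
    (hU : ∀ k ≤ n, ∀ x ∈ s, IsUnit (W k x))
    (Φ : ℕ → Polynomial (Matrix (Fin N) (Fin N) ℂ))
    (hPearson : ∀ k < n, ∀ x ∈ s, W (k + 1) x = W k x * evalM (Φ k) x) :
    ∀ k ≤ n, ∀ x ∈ s,
      ((List.range k).map fun j => evalM (Φ j) x).prod = (W 0 x)⁻¹ * W k x := by
  intro k
  induction k with
  | zero =>
    intro _ x hx
    simp only [List.range_zero, List.map_nil, List.prod_nil]
    exact (Matrix.nonsing_inv_mul _
      ((Matrix.isUnit_iff_isUnit_det _).mp (hU 0 (Nat.zero_le n) x hx))).symm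
  | succ k ih =>
    intro hk x hx
    rw [List.range_succ, List.map_append, List.prod_append, List.map_singleton,
        List.prod_singleton, ih (Nat.le_of_succ_le hk) x hx, mul_assoc,
        hPearson k hk x hx]

variable {s : Set ℝ}

/-- iterated derivatives of a smooth-on-open-set function are smooth. -/
lemma aux_iter_smooth (hs : IsOpen s) {f : ℝ → ℂ} (hf : ContDiffOn ℝ (⊤ : ℕ∞) f s) (k : ℕ) :
    ContDiffOn ℝ (⊤ : ℕ∞) (iteratedDeriv k f) s := by
  induction k with
  | zero => simpa [iteratedDeriv_zero] using hf
  | succ k ih =>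
    rw [iteratedDeriv_succ]
    exact ih.deriv_of_isOpen hs (by simp)

lemma aux_diffAt (hs : IsOpen s) {f : ℝ → ℂ} (hf : ContDiffOn ℝ (⊤ : ℕ∞) f s) {x : ℝ} (hx : x ∈ s) :
    DifferentiableAt ℝ f x :=
  (hf.contDiffAt (hs.mem_nhds hx)).differentiableAt (by simp)

lemma aux_within (hs : IsOpen s) (k : ℕ) (f : ℝ → ℂ) {x : ℝ} (hx : x ∈ s) :
    iteratedDerivWithin k f s x = iteratedDeriv k f x := by
  rw [iteratedDerivWithin_eq_iteratedFDerivWithin, iteratedDeriv_eq_iteratedFDeriv,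
      iteratedFDerivWithin_of_isOpen k hs hx]

/-- sum rule on an open set -/
lemma aux_iter_sum (hs : IsOpen s) {ι : Type*} (u : Finset ι) (f : ι → ℝ → ℂ)
    (hf : ∀ i ∈ u, ContDiffOn ℝ (⊤ : ℕ∞) (f i) s) (k : ℕ) {x : ℝ} (hx : x ∈ s) :
    iteratedDeriv k (fun y => ∑ i ∈ u, f i y) x = ∑ i ∈ u, iteratedDeriv k (f i) x := by
  classical
  induction u using Finset.induction with
  | empty =>
    have h0 : ∀ k, iteratedDeriv k (fun _ : ℝ => (0:ℂ)) = fun _ => 0 := by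
      intro k; induction k with
      | zero => simp [iteratedDeriv_zero]
      | succ k ih => rw [iteratedDeriv_succ, ih]; funext y; simp
    simp only [Finset.sum_empty]
    rw [h0]
  | insert a u hni ih =>
    have h1 : ContDiffOn ℝ (⊤ : ℕ∞) (f a) s := hf a (Finset.mem_insert_self a u)
    have h2 : ContDiffOn ℝ (⊤ : ℕ∞) (fun y => ∑ i ∈ u, f i y) s :=
      ContDiffOn.sum fun i hi => hf i (Finset.mem_insert_of_mem hi)
    have : (fun y => ∑ i ∈ insert a u, f i y) = fun y => f a y + ∑ i ∈ u, f i y := by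
      funext y; rw [Finset.sum_insert hni]
    rw [this, Finset.sum_insert hni, ← ih (fun i hi => hf i (Finset.mem_insert_of_mem hi))]
    -- use within-versions
    have hU : UniqueDiffOn ℝ s := hs.uniqueDiffOn
    have e0 : iteratedDeriv k (fun y => f a y + ∑ i ∈ u, f i y) x
        = iteratedDerivWithin k (f a + fun y => ∑ i ∈ u, f i y) s x :=
      (aux_within hs k _ hx).symm
    have e1 := aux_within hs k (f a) hx
    have e2 := aux_within hs k (fun y => ∑ i ∈ u, f i y) hx
    rw [e0, ← e1, ← e2]
    exact iteratedDerivWithin_add hx hU ((h1 x hx).of_le (by exact_mod_cast le_top)) ((h2 x hx).of_le (by exact_mod_cast le_top))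

/-- Leibniz rule for iterated derivatives on an open set. -/
lemma aux_leibniz (hs : IsOpen s) (f g : ℝ → ℂ)
    (hf : ContDiffOn ℝ (⊤ : ℕ∞) f s) (hg : ContDiffOn ℝ (⊤ : ℕ∞) g s) (m : ℕ) :
    ∀ x ∈ s, iteratedDeriv m (fun y => f y * g y) x =
      ∑ k ∈ Finset.range (m + 1),
        (m.choose k : ℂ) * (iteratedDeriv k f x * iteratedDeriv (m - k) g x) := by
  induction m with
  | zero => intro x hx; simp [iteratedDeriv_zero]
  | succ m ih =>
    intro x hx
    have hdf : ∀ k, DifferentiableAt ℝ (iteratedDeriv k f) x := fun k =>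
      aux_diffAt hs (aux_iter_smooth hs hf k) hx
    have hdg : ∀ k, DifferentiableAt ℝ (iteratedDeriv k g) x := fun k =>
      aux_diffAt hs (aux_iter_smooth hs hg k) hx
    rw [iteratedDeriv_succ]
    have hEq : deriv (iteratedDeriv m fun y => f y * g y) x
        = deriv (fun y => ∑ k ∈ Finset.range (m + 1),
            (m.choose k : ℂ) * (iteratedDeriv k f y * iteratedDeriv (m - k) g y)) x := by
      apply Filter.EventuallyEq.deriv_eq
      filter_upwards [hs.mem_nhds hx] with y hy using ih y hy
    rw [hEq, deriv_fun_sum (A := fun k y => (m.choose k : ℂ) * (iteratedDeriv k f y * iteratedDeriv (m - k) g y)) (fun k _ => ((hdf k).mul (hdg (m - k))).const_mul _)]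
    have hterm : ∀ k ∈ Finset.range (m + 1),
        deriv (fun y => (m.choose k : ℂ) * (iteratedDeriv k f y * iteratedDeriv (m - k) g y)) x
          = (m.choose k : ℂ) * (iteratedDeriv k f x * iteratedDeriv (m + 1 - k) g x)
            + (m.choose k : ℂ) * (iteratedDeriv (k + 1) f x * iteratedDeriv (m - k) g x) := by
      intro k hk
      have hk' : k ≤ m := Nat.lt_succ_iff.mp (Finset.mem_range.mp hk)
      rw [deriv_const_mul (d := fun y => iteratedDeriv k f y * iteratedDeriv (m - k) g y) _ ((hdf k).mul (hdg (m - k))), deriv_fun_mul (hdf k) (hdg (m - k)),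
          ← iteratedDeriv_succ, ← iteratedDeriv_succ, Nat.sub_add_comm hk']
      ring
    rw [Finset.sum_congr rfl hterm, Finset.sum_add_distrib,
        Finset.sum_choose_succ_mul (fun i j => iteratedDeriv i f x * iteratedDeriv j g x) m]

variable {s : Set ℝ} {N : ℕ}

def SmEnt {N : ℕ} (s : Set ℝ) (F : ℝ → Matrix (Fin N) (Fin N) ℂ) : Prop :=
  ∀ i j : Fin N, ContDiffOn ℝ (⊤ : ℕ∞) (fun x => F x i j) s

lemma aux_mul_smooth {F G : ℝ → Matrix (Fin N) (Fin N) ℂ}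
    (hF : SmEnt s F) (hG : SmEnt s G) : SmEnt s (fun x => F x * G x) := by
  intro i j
  have : (fun x => (F x * G x) i j) = fun x => ∑ l, F x i l * G x l j :=
    funext fun x => Matrix.mul_apply
  rw [this]
  exact ContDiffOn.sum fun l _ => (hF i l).mul (hG l j)

lemma aux_det_smooth {B : ℝ → Matrix (Fin N) (Fin N) ℂ} (hB : SmEnt s B) :
    ContDiffOn ℝ (⊤ : ℕ∞) (fun x => (B x).det) s := by
  have : (fun x => (B x).det)
      = fun x => ∑ σ : Equiv.Perm (Fin N),
          ((Equiv.Perm.sign σ : ℤ) : ℂ) * ∏ i, B x (σ i) i :=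
    funext fun x => Matrix.det_apply' _
  rw [this]
  exact ContDiffOn.sum fun σ _ =>
    (contDiffOn_const.mul (contDiffOn_prod fun i _ => hB (σ i) i))

lemma aux_inv_smooth (hs : IsOpen s) {W : ℝ → Matrix (Fin N) (Fin N) ℂ}
    (hW : SmEnt s W) (hU : ∀ x ∈ s, IsUnit (W x)) : SmEnt s (fun x => (W x)⁻¹) := by
  intro i j
  have hdet : ContDiffOn ℝ (⊤ : ℕ∞) (fun x => (W x).det) s := aux_det_smooth hW
  have hadj : ContDiffOn ℝ (⊤ : ℕ∞) (fun x => (W x).adjugate i j) s := by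
    have : (fun x => (W x).adjugate i j)
        = fun x => ((W x).updateRow j (Pi.single i 1)).det :=
      funext fun x => Matrix.adjugate_apply _ i j
    rw [this]
    apply aux_det_smooth
    intro k l
    by_cases hk : k = j
    · subst hk
      simp only [Matrix.updateRow_self]
      exact contDiffOn_const
    · simp only [Matrix.updateRow_ne hk]
      exact hW k l
  have : (fun x => (W x)⁻¹ i j) = fun x => ((W x).det)⁻¹ * (W x).adjugate i j := by
    funext x
    rw [Matrix.inv_def, Matrix.smul_apply, Ring.inverse_eq_inv', smul_eq_mul]
  rw [this]
  refine ContDiffOn.mul (hdet.inv ?_) hadj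
  intro x hx
  exact (Matrix.isUnit_iff_isUnit_det _ |>.mp (hU x hx)).ne_zero

lemma aux_derivM_smooth (hs : IsOpen s) {F : ℝ → Matrix (Fin N) (Fin N) ℂ}
    (hF : SmEnt s F) : SmEnt s (derivM F) := by
  intro i j
  have : (fun x => derivM F x i j) = deriv (fun y => F y i j) := rfl
  rw [this]
  exact (hF i j).deriv_of_isOpen hs (by simp)

lemma aux_iterDerivM_derivM {F : ℝ → Matrix (Fin N) (Fin N) ℂ} (m : ℕ) (x : ℝ) :
    iterDerivM m (derivM F) x = iterDerivM (m + 1) F x := by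
  ext i j
  show iteratedDeriv m (fun y => derivM F y i j) x = iteratedDeriv (m+1) (fun y => F y i j) x
  rw [iteratedDeriv_succ']
  rfl

lemma aux_iterDerivM_congr (hs : IsOpen s) {F G : ℝ → Matrix (Fin N) (Fin N) ℂ}
    (h : ∀ y ∈ s, F y = G y) (m : ℕ) {x : ℝ} (hx : x ∈ s) :
    iterDerivM m F x = iterDerivM m G x := by
  ext i j
  refine Filter.EventuallyEq.iteratedDeriv_eq m ?_
  filter_upwards [hs.mem_nhds hx] with y hy
  rw [h y hy]

lemma aux_leibnizM (hs : IsOpen s) {F G : ℝ → Matrix (Fin N) (Fin N) ℂ}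
    (hF : SmEnt s F) (hG : SmEnt s G) (m : ℕ) {x : ℝ} (hx : x ∈ s) :
    iterDerivM m (fun y => F y * G y) x
      = ∑ k ∈ Finset.range (m + 1),
          (m.choose k : ℂ) • (iterDerivM k F x * iterDerivM (m - k) G x) := by
  ext i j
  show iteratedDeriv m (fun y => (F y * G y) i j) x = _
  have L : (fun y => (F y * G y) i j)
      = fun y => ∑ l, (fun z => F z i l) y * (fun z => G z l j) y :=
    funext fun y => Matrix.mul_apply
  rw [L, aux_iter_sum hs Finset.univ _ (fun l _ => (hF i l).mul (hG l j)) m hx]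
  have step : ∀ l : Fin N, iteratedDeriv m (fun y => F y i l * G y l j) x
      = ∑ k ∈ Finset.range (m + 1), (m.choose k : ℂ) *
          (iteratedDeriv k (fun y => F y i l) x * iteratedDeriv (m - k) (fun y => G y l j) x) :=
    fun l => aux_leibniz hs _ _ (hF i l) (hG l j) m x hx
  rw [Finset.sum_congr rfl fun l _ => step l, Finset.sum_comm]
  simp only [Matrix.sum_apply, Matrix.smul_apply, Matrix.mul_apply, Matrix.of_apply,
    smul_eq_mul, Finset.mul_sum]
  rfl

lemma aux_iterShift (hs : IsOpen s) (n : ℕ) (W : ℕ → ℝ → Matrix (Fin N) (Fin N) ℂ)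
    (hW : ∀ k ≤ n, SmEnt s (W k)) (hU : ∀ k ≤ n, ∀ x ∈ s, IsUnit (W k x)) :
    ∀ m ≤ n, ∀ Q : ℝ → Matrix (Fin N) (Fin N) ℂ, SmEnt s Q → ∀ x ∈ s,
      iterShift W m Q x = iterDerivM m (fun y => Q y * W m y) x * (W 0 x)⁻¹ := by
  intro m
  induction m with
  | zero =>
    intro _ Q hQ x hx
    show Q x = iterDerivM 0 (fun y => Q y * W 0 y) x * (W 0 x)⁻¹
    have h0 : iterDerivM 0 (fun y => Q y * W 0 y) x = Q x * W 0 x := by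
      ext i j
      show iteratedDeriv 0 (fun y => (Q y * W 0 y) i j) x = _
      rw [iteratedDeriv_zero]
    rw [h0, Matrix.mul_nonsing_inv_cancel_right _ _
      ((Matrix.isUnit_iff_isUnit_det _).mp (hU 0 (Nat.zero_le n) x hx))]
  | succ m ih =>
    intro hm Q hQ x hx
    have hm' : m ≤ n := Nat.le_of_succ_le hm
    have hQ' : SmEnt s (shiftOp W m Q) :=
      aux_mul_smooth (aux_derivM_smooth hs (aux_mul_smooth hQ (hW (m+1) hm)))
        (aux_inv_smooth hs (hW m hm') (hU m hm'))
    have key : ∀ y ∈ s, shiftOp W m Q y * W m y = derivM (fun z => Q z * W (m+1) z) y := by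
      intro y hy
      exact Matrix.nonsing_inv_mul_cancel_right _ _
        ((Matrix.isUnit_iff_isUnit_det _).mp (hU m hm' y hy))
    calc iterShift W (m+1) Q x = iterShift W m (shiftOp W m Q) x := rfl
      _ = iterDerivM m (fun y => shiftOp W m Q y * W m y) x * (W 0 x)⁻¹ :=
          ih hm' _ hQ' x hx
      _ = iterDerivM m (derivM (fun z => Q z * W (m+1) z)) x * (W 0 x)⁻¹ := by
          rw [aux_iterDerivM_congr hs key m hx]
      _ = iterDerivM (m+1) (fun y => Q y * W (m+1) y) x * (W 0 x)⁻¹ := by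
          rw [aux_iterDerivM_derivM]
/-- Theorem 4.1 (Burchnall's formula) for matrix-valued orthogonal polynomials. -/
theorem stmt_18 (N : ℕ) (hN : 0 < N) (n : ℕ) (a b : EReal)
    (W : ℕ → ℝ → Matrix (Fin N) (Fin N) ℂ)
    (hWsmooth : ∀ k ≤ n, ∀ i j : Fin N,
      ContDiffOn ℝ (⊤ : ℕ∞) (fun x => W k x i j) (ointerval a b))
    (hWherm : ∀ k ≤ n, ∀ x ∈ ointerval a b, (W k x).IsHermitian ∧ IsUnit (W k x))
    (Φ : ℕ → Polynomial (Matrix (Fin N) (Fin N) ℂ))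
    (hPearson : ∀ k < n, ∀ x ∈ ointerval a b, W (k + 1) x = W k x * evalM (Φ k) x)
    (G : ℕ → Matrix (Fin N) (Fin N) ℂ) (hG : ∀ k ≤ n, IsUnit (G k))
    (P : ℕ → Polynomial (Matrix (Fin N) (Fin N) ℂ))
    (hPdeg : ∀ k ≤ n, (P k).natDegree = n - k)
    (hRodrigues : ∀ k ≤ n, ∀ x ∈ ointerval a b,
      evalM (P k) x = G k * iterDerivM (n - k) (W n) x * (W k x)⁻¹)
    (Q : ℝ → Matrix (Fin N) (Fin N) ℂ)
    (hQ : ∀ i j : Fin N, ContDiffOn ℝ (⊤ : ℕ∞) (fun x => Q x i j) (ointerval a b)) :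
    ∀ x ∈ ointerval a b,
      iterShift W n Q x =
        ∑ k ∈ Finset.range (n + 1),
          (n.choose k : ℂ) •
            (iterDerivM k Q x * (G k)⁻¹ * evalM (P k) x *
              (((List.range k).map fun j => evalM (Φ j) x).prod)ᴴ) := by
  intro x hx
  have hs : IsOpen (ointerval a b) := aux_isOpen_ointerval a b
  have hU : ∀ k ≤ n, ∀ y ∈ ointerval a b, IsUnit (W k y) :=
    fun k hk y hy => (hWherm k hk y hy).2
  rw [aux_iterShift hs n W (fun k hk => hWsmooth k hk) hU n le_rfl Q hQ x hx,
      aux_leibnizM hs hQ (hWsmooth n le_rfl) n hx, Finset.sum_mul]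
  refine Finset.sum_congr rfl ?_
  intro k hk
  have hk' : k ≤ n := Nat.lt_succ_iff.mp (Finset.mem_range.mp hk)
  rw [smul_mul_assoc]
  congr 1
  have hprod := aux_prodPhi n W hU Φ hPearson k hk' x hx
  have hherm0 : (W 0 x)ᴴ = W 0 x := (hWherm 0 (Nat.zero_le n) x hx).1
  have hhermk : (W k x)ᴴ = W k x := (hWherm k hk' x hx).1
  have hconj : (((List.range k).map fun j => evalM (Φ j) x).prod)ᴴ
      = W k x * (W 0 x)⁻¹ := by
    rw [hprod, Matrix.conjTranspose_mul, Matrix.conjTranspose_nonsing_inv, hherm0, hhermk]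
  have hdetk := (Matrix.isUnit_iff_isUnit_det _).mp (hU k hk' x hx)
  have hdetG := (Matrix.isUnit_iff_isUnit_det _).mp (hG k hk')
  rw [hconj, hRodrigues k hk' x hx]
  have key : iterDerivM k Q x * (G k)⁻¹ *
        (G k * iterDerivM (n - k) (W n) x * (W k x)⁻¹) * (W k x * (W 0 x)⁻¹)
      = iterDerivM k Q x * iterDerivM (n - k) (W n) x * (W 0 x)⁻¹ := by
    simp only [← mul_assoc]
    rw [Matrix.nonsing_inv_mul_cancel_right _ _ hdetk,
        Matrix.nonsing_inv_mul_cancel_right _ _ hdetG]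
  exact key.symm
end
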